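/- arXiv:1001.4337 — 9 statements merged into one kernel-verified Lean document; each statement's English description precedes it below -/
import Mathlib

section
/- Let f : [0,1] → ℝ and E ⊆ [0,1] be such that inf_{x∈E} h_f(x) = h for some h > 0. Then the Hausdorff dimension of the graph of f over E satisfies dim_H {(x, f(x)) : x ∈ E} ≤ max( min( (dim_H E)/h , dim_H E + 1 − h ), dim_H E ). -/
open MeasureTheory Filter Set

noncomputable section

abbrev Sig := ℕ → Bool

def shift (t : Sig) : Sig := fun n => t (n + 1)

def birkhoff (φ : Sig → ℝ) (n : ℕ) (t : Sig) : ℝ :=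
  ∑ i ∈ Finset.range n, φ (shift^[i] t)

def cylN (t : Sig) (n : ℕ) : Set Sig := {s | ∀ i < n, s i = t i}

def cylF {n : ℕ} (w : Fin n → Bool) : Set Sig := {t | ∀ i : Fin n, t i = w i}

def takeF {m : ℕ} (w : Fin m → Bool) (k : ℕ) : Fin k → Bool :=
  fun i => if h : (i : ℕ) < m then w ⟨i, h⟩ else false

def takeInf (t : Sig) (k : ℕ) : Fin k → Bool := fun i => t i

noncomputable def lamF {n : ℕ} (w : Fin n → Bool) : ℝ :=
  ∑ i : Fin n, if w i then (2:ℝ) ^ (-((i:ℕ):ℤ) - 1) else 0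

noncomputable def lamInf (t : Sig) : ℝ :=
  ∑' i : ℕ, if t i then (2:ℝ) ^ (-(i:ℤ) - 1) else 0

noncomputable def rho (s t : Sig) : ℝ :=
  sInf {r : ℝ | ∃ n : ℕ, r = (2:ℝ) ^ (-(n:ℤ)) ∧ ∀ i < n, s i = t i}

noncomputable def distH (A B : Set Sig) : ℝ :=
  max (⨆ a ∈ A, ⨅ b ∈ B, rho a b) (⨆ b ∈ B, ⨅ a ∈ A, rho a b)

def HolderPotential (φ : Sig → ℝ) : Prop :=
  ∃ c > 0, ∃ a > 0, ∀ s t, |φ s - φ t| ≤ c * (rho s t) ^ a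

def GibbsOn (X : Set Sig) (φ : Sig → ℝ) (C P : ℝ) (μ : Measure Sig) : Prop :=
  ∀ t ∈ X, ∀ n : ℕ, ∀ t' ∈ cylN t n,
    C⁻¹ * Real.exp (birkhoff φ n t' - n * P) ≤ (μ (cylN t n)).toReal ∧
    (μ (cylN t n)).toReal ≤ C * Real.exp (birkhoff φ n t' - n * P)

def neigh {n : ℕ} (w : Fin n → Bool) : Set (Fin n → Bool) :=
  {u | |lamF u - lamF w| ≤ (2:ℝ) ^ (-(n:ℤ))}

def pairP (p : ℕ) : Set ((Fin (p+1) → Bool) × (Fin (p+1) → Bool)) :=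
  {uv | takeF uv.2 p ∈ neigh (takeF uv.1 p) ∧ uv.2 ∉ neigh uv.1}

noncomputable def oscil (f : ℝ → ℝ) (x r : ℝ) : ℝ :=
  sSup ((fun p : ℝ × ℝ => |f p.1 - f p.2|) ''
    ((Metric.ball x r ∩ Set.Icc 0 1) ×ˢ (Metric.ball x r ∩ Set.Icc 0 1)))

noncomputable def holderExp (f : ℝ → ℝ) (x : ℝ) : ℝ :=
  liminf (fun r => Real.log (oscil f x r) / Real.log r) (nhdsWithin 0 (Set.Ioi 0))

noncomputable def Ijk (j k : ℕ) : Set ℝ :=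
  Set.Ico ((k:ℝ) * (2:ℝ) ^ (-(j:ℤ))) (((k:ℝ) + 1) * (2:ℝ) ^ (-(j:ℤ)))

open scoped Classical in
noncomputable def tauSum (μ : Measure ℝ) (j : ℕ) (q : ℝ) : ℝ :=
  ∑ k ∈ Finset.range (2 ^ j), if μ (Ijk j k) ≠ 0 then (μ (Ijk j k)).toReal ^ q else 0

noncomputable def tauMeas (μ : Measure ℝ) (q : ℝ) : ℝ :=
  liminf (fun j : ℕ => -(1 / (j:ℝ)) * Real.logb 2 (tauSum μ j q)) atTop

noncomputable def xiF (μ : Measure ℝ) (s₀ p₀ : ℝ) (q : ℝ) : ℝ :=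
  q * (s₀ - 1/p₀) + tauMeas μ (q / p₀)

noncomputable def xiStar (μ : Measure ℝ) (s₀ p₀ : ℝ) (h : ℝ) : ℝ :=
  ⨅ q : ℝ, (q * h - xiF μ s₀ p₀ q)

noncomputable def FW {Ω : Type*} (μ : Measure ℝ) (s₀ p₀ : ℝ) (eps : ℕ → ℕ → ℝ)
    (ψ : ℝ → ℝ) (π : ℕ → ℕ → Ω → ℝ) (ω : Ω) (x : ℝ) : ℝ :=
  ∑' j : ℕ, ∑ k ∈ Finset.range (2 ^ j),
    π j k ω * eps j k * (2:ℝ) ^ (-(j:ℝ) * (s₀ - 1/p₀)) * (μ (Ijk j k)).toReal ^ (1/p₀) *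
      ψ ((2:ℝ) ^ (j:ℕ) * x - (k:ℝ))

open scoped Classical in
noncomputable def pressure (X : Set Sig) (φ : Sig → ℝ) : ℝ :=
  liminf (fun n : ℕ => (1 / (n:ℝ)) * Real.log
    (∑ w : Fin n → Bool,
      if (cylF w ∩ X).Nonempty then Real.exp (sSup (birkhoff φ n '' cylF w)) else 0)) atTop

noncomputable def tauPhi (φ : Sig → ℝ) (q : ℝ) : ℝ :=
  (q * pressure Set.univ φ - pressure Set.univ (fun t => q * φ t)) / Real.log 2

noncomputable def tauPhiStar (φ : Sig → ℝ) (α : ℝ) : ℝ := ⨅ q : ℝ, (q * α - tauPhi φ q)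

noncomputable def pGap (X : Set Sig) (φ : Sig → ℝ) (q : ℝ) : ℝ :=
  pressure Set.univ (fun t => q * φ t) - pressure X (fun t => q * φ t)

noncomputable def alphaQ (X : Set Sig) (φ : Sig → ℝ) (q : ℝ) : ℝ :=
  deriv (tauPhi φ) q + deriv (fun q' => pGap X φ q' / Real.log 2) q

noncomputable def hQ (X : Set Sig) (φ : Sig → ℝ) (s₀ p₀ q : ℝ) : ℝ :=
  s₀ - 1/p₀ + alphaQ X φ q / p₀

noncomputable def DQ (X : Set Sig) (φ : Sig → ℝ) (q : ℝ) : ℝ :=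
  tauPhiStar φ (deriv (tauPhi φ) q) -
    (-q * deriv (pGap X φ) q + pGap X φ q) / Real.log 2

/-!
Fix `γ < min h 1`. Every point of `E` has a scale below which `f` oscillates by at most `r ^ γ`
on balls of radius `r` around it; sorting the points by that scale writes `E` as a countable union
of sets `F` on which the graph map is locally `γ`-Hölder, so `dimH (graph F) ≤ dimH F / γ`.
On such an `F`, a piece `U` of diameter `L` of a fine cover of `F` lifts to about `L ^ (γ - 1)`
sets of diameter `2 L` covering the graph over `U`: the graph lies in a strip of height
`2 (2 L) ^ γ`, cut into bins of height `2 L`. Hence `μH[s + 1 - γ] (graph F) ≲ μH[s] F` and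
`dimH (graph F) ≤ dimH F + 1 - γ`. Letting `γ` increase to `min h 1` gives the bound, which for
`h > 1` reads `dimH (graph E) ≤ dimH E`.
-/

open Metric
open scoped ENNReal NNReal Topology

theorem floor_add_one_mul_rpow_le {r s γ : ℝ} (hr0 : 0 < r) (hr1 : r ≤ 1) (hγ1 : γ ≤ 1) :
    ((⌊2 * r ^ γ / r⌋₊ : ℝ) + 1) * r ^ (s + 1 - γ) ≤ 3 * r ^ s := by
  have hfloor : (⌊2 * r ^ γ / r⌋₊ : ℝ) ≤ 2 * r ^ γ / r := Nat.floor_le (by positivity)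
  have hexp : r ^ γ / r * r ^ (s + 1 - γ) = r ^ s := by
    rw [div_mul_eq_mul_div, ← Real.rpow_add hr0, show γ + (s + 1 - γ) = s + 1 by ring,
      Real.rpow_add_one hr0.ne', mul_div_cancel_right₀ _ hr0.ne']
  have hle : r ^ (s + 1 - γ) ≤ r ^ s := Real.rpow_le_rpow_of_exponent_ge hr0 hr1 (by linarith)
  calc ((⌊2 * r ^ γ / r⌋₊ : ℝ) + 1) * r ^ (s + 1 - γ)
      ≤ (2 * r ^ γ / r + 1) * r ^ (s + 1 - γ) := by gcongr
    _ = 2 * r ^ s + r ^ (s + 1 - γ) := by rw [add_mul, mul_div_assoc, mul_assoc, hexp, one_mul]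
    _ ≤ 3 * r ^ s := by linarith

theorem tsum_ediam_rpow_le_of_eq_empty {X : Type*} [PseudoEMetricSpace X] {B : ℕ → Set X}
    {N : ℕ} {r t : ℝ} (hr : 0 < r) (ht : 0 < t) (hdiam : ∀ j, ediam (B j) ≤ ENNReal.ofReal r)
    (hempty : ∀ j, N < j → B j = ∅) :
    ∑' j, ediam (B j) ^ t ≤ ENNReal.ofReal (((N : ℝ) + 1) * r ^ t) := by
  have hzero : ∀ j ∉ Finset.range (N + 1), ediam (B j) ^ t = 0 := fun j hj => by
    rw [hempty j (by simpa [Nat.lt_succ_iff] using hj), ediam_empty, ENNReal.zero_rpow_of_pos ht]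
  calc ∑' j, ediam (B j) ^ t = ∑ j ∈ Finset.range (N + 1), ediam (B j) ^ t := tsum_eq_sum hzero
    _ ≤ ∑ j ∈ Finset.range (N + 1), ENNReal.ofReal r ^ t :=
      Finset.sum_le_sum fun j _ => ENNReal.rpow_le_rpow (hdiam j) ht.le
    _ = ENNReal.ofReal (((N : ℝ) + 1) * r ^ t) := by
      rw [Finset.sum_const, Finset.card_range, nsmul_eq_mul, ENNReal.ofReal_rpow_of_pos hr,
        ENNReal.ofReal_mul (by positivity)]
      norm_cast

theorem le_of_forall_mem_Ioo_le_of_continuousAt {β : Type*} [TopologicalSpace β] [Preorder β]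
    [ClosedIciTopology β] {g : ℝ → β} {x : β} {a b : ℝ} (hab : a < b) (hg : ContinuousAt g b)
    (hle : ∀ c ∈ Ioo a b, x ≤ g c) : x ≤ g b :=
  ge_of_tendsto (hg.tendsto.mono_left nhdsWithin_le_nhds)
    (Filter.mem_of_superset (Ioo_mem_nhdsLT hab) hle)

section GraphDimension

variable {f : ℝ → ℝ} {γ r₀ : ℝ}

def OscLeRpowAt (f : ℝ → ℝ) (γ r₀ x : ℝ) : Prop :=
  ∀ r ∈ Ioo 0 r₀, ∀ s ∈ ball x r ∩ Icc 0 1, ∀ t ∈ ball x r ∩ Icc 0 1, |f s - f t| ≤ r ^ γ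

theorem abs_sub_le_rpow_of_lt_log_oscil_div_log {x r : ℝ} (hγ : 0 < γ) (hr0 : 0 < r)
    (hr1 : r < 1) (hlt : γ < Real.log (oscil f x r) / Real.log r) :
    ∀ s ∈ ball x r ∩ Icc 0 1, ∀ t ∈ ball x r ∩ Icc 0 1, |f s - f t| ≤ r ^ γ := by
  intro s hs t ht
  have hbdd : BddAbove ((fun p : ℝ × ℝ => |f p.1 - f p.2|) ''
      ((ball x r ∩ Icc 0 1) ×ˢ (ball x r ∩ Icc 0 1))) := by
    by_contra hb
    rw [oscil, Real.sSup_of_not_bddAbove hb, Real.log_zero, zero_div] at hlt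
    exact hlt.not_gt hγ
  have hst : |f s - f t| ≤ oscil f x r := le_csSup hbdd ⟨(s, t), ⟨hs, ht⟩, rfl⟩
  rcases le_or_gt (oscil f x r) 0 with hosc | hosc
  · exact hst.trans (hosc.trans (Real.rpow_nonneg hr0.le γ))
  have hlog : Real.log (oscil f x r) < Real.log (r ^ γ) := by
    rw [Real.log_rpow hr0, ← lt_div_iff_of_neg (Real.log_neg hr0 hr1)]
    exact hlt
  exact hst.trans ((Real.log_lt_log_iff hosc (Real.rpow_pos_of_pos hr0 γ)).1 hlog).le

theorem exists_oscLeRpowAt_of_lt_holderExp {x : ℝ} (hγ : 0 < γ) (hx : γ < holderExp f x) :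
    ∃ r₀ > 0, OscLeRpowAt f γ r₀ x := by
  have hbdd : IsBoundedUnder (· ≥ ·) (𝓝[>] 0)
      (fun r => Real.log (oscil f x r) / Real.log r) := by
    by_contra hb
    rw [holderExp, Real.liminf_of_not_isBoundedUnder hb] at hx
    exact hx.not_gt hγ
  have hev := (eventually_lt_of_lt_liminf hx hbdd).and (nhdsWithin_le_nhds (Iio_mem_nhds one_pos))
  obtain ⟨r₀, hr₀, hr₀sub⟩ := (nhdsGT_basis (0 : ℝ)).eventually_iff.1 hev
  exact ⟨r₀, hr₀, fun r hr => abs_sub_le_rpow_of_lt_log_oscil_div_log hγ hr.1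
    (hr₀sub hr).2 (hr₀sub hr).1⟩

theorem iUnion_setOf_oscLeRpowAt_eq {E : Set ℝ} (hγ : 0 < γ)
    (hE : ∀ x ∈ E, γ < holderExp f x) :
    ⋃ m : ℕ, {x ∈ E | OscLeRpowAt f γ (1 / (m + 1)) x} = E := by
  refine Subset.antisymm (iUnion_subset fun m => sep_subset _ _) fun x hx => ?_
  obtain ⟨r₀, hr₀, hosc⟩ := exists_oscLeRpowAt_of_lt_holderExp hγ (hE x hx)
  obtain ⟨m, hm⟩ := exists_nat_one_div_lt hr₀
  exact mem_iUnion.2 ⟨m, hx, fun r hr => hosc r ⟨hr.1, hr.2.trans hm⟩⟩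

theorem OscLeRpowAt.abs_sub_le {x y : ℝ} (hosc : OscLeRpowAt f γ r₀ x) (hx : x ∈ Icc 0 1)
    (hy : y ∈ Icc 0 1) (hxy : |x - y| < r₀) : |f x - f y| ≤ |x - y| ^ γ := by
  rcases eq_or_ne x y with rfl | hne
  · simpa using Real.rpow_nonneg le_rfl γ
  have hd : 0 < |x - y| := abs_pos.2 (sub_ne_zero.2 hne)
  have hlim : Tendsto (fun r : ℝ => r ^ γ) (𝓝[>] |x - y|) (𝓝 (|x - y| ^ γ)) :=
    (Real.continuousAt_rpow_const _ _ (Or.inl hd.ne')).tendsto.mono_left nhdsWithin_le_nhds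
  refine ge_of_tendsto hlim ?_
  filter_upwards [Ioo_mem_nhdsGT hxy] with r hr
  refine hosc r ⟨hd.trans hr.1, hr.2⟩ x ⟨mem_ball_self (hd.trans hr.1), hx⟩ y ⟨?_, hy⟩
  rw [mem_ball, Real.dist_eq, abs_sub_comm]
  exact hr.1

theorem dimH_graphOn_le_div {F : Set ℝ} (hF : F ⊆ Icc 0 1)
    (hosc : ∀ x ∈ F, OscLeRpowAt f γ r₀ x) (hr₀ : 0 < r₀) (hγ0 : 0 < γ) (hγ1 : γ ≤ 1) :
    dimH (F.graphOn f) ≤ dimH F / ENNReal.ofReal γ := by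
  refine dimH_image_le_of_locally_holder_on (Real.toNNReal_pos.2 hγ0) fun x _ =>
    ⟨1, F ∩ ball x (r₀ / 2), inter_mem_nhdsWithin _ (ball_mem_nhds _ (half_pos hr₀)), ?_⟩
  rintro u ⟨huF, hux⟩ v ⟨hvF, hvx⟩
  have huv : |u - v| < r₀ := by
    rw [← Real.dist_eq]
    linarith [dist_triangle_right u v x, mem_ball.1 hux, mem_ball.1 hvx]
  have hfuv := (hosc u huF).abs_sub_le (hF huF) (hF hvF) huv
  have hid : |u - v| ≤ |u - v| ^ γ := by
    refine Real.self_le_rpow_of_le_one (abs_nonneg _) ?_ hγ1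
    rw [abs_sub_le_iff]
    constructor <;> linarith [(hF huF).1, (hF huF).2, (hF hvF).1, (hF hvF).2]
  change edist (u, f u) (v, f v) ≤ _
  rw [ENNReal.coe_one, one_mul, Real.coe_toNNReal _ hγ0.le, Prod.edist_eq, edist_dist, edist_dist,
    Real.dist_eq, Real.dist_eq, ENNReal.ofReal_rpow_of_nonneg (abs_nonneg _) hγ0.le]
  exact max_le (ENNReal.ofReal_le_ofReal hid) (ENNReal.ofReal_le_ofReal hfuv)

theorem exists_graphOn_inter_cover_of_mem {F U : Set ℝ} {x₀ s L : ℝ} (hF : F ⊆ Icc 0 1)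
    (hosc : ∀ x ∈ F, OscLeRpowAt f γ r₀ x) (hγ1 : γ ≤ 1) (hs : 0 < s) (hx₀ : x₀ ∈ U ∩ F)
    (hL : 0 < L) (hUL : ediam U ≤ ENNReal.ofReal L) (hLr₀ : 2 * L < r₀) (hL1 : 2 * L ≤ 1) :
    ∃ B : ℕ → Set (ℝ × ℝ), (U ∩ F).graphOn f ⊆ ⋃ j, B j ∧
      (∀ j, ediam (B j) ≤ ENNReal.ofReal (2 * L)) ∧
      ∑' j, ediam (B j) ^ (s + 1 - γ) ≤ ENNReal.ofReal (3 * (2 * L) ^ s) := by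
  obtain ⟨hx₀U, hx₀F⟩ := hx₀
  set r := 2 * L
  have hr0 : 0 < r := by positivity
  have hdist : ∀ y ∈ U, ∀ y' ∈ U, dist y y' ≤ L := fun y hy y' hy' =>
    (edist_le_ofReal hL.le).1 ((edist_le_ediam_of_mem hy hy').trans hUL)
  have hosc₀ : ∀ y ∈ U ∩ F, |f y - f x₀| ≤ r ^ γ := fun y hy =>
    hosc x₀ hx₀F r ⟨hr0, hLr₀⟩ y ⟨mem_ball.2 ((hdist y hy.1 x₀ hx₀U).trans_lt (by linarith)),
      hF hy.2⟩ x₀ ⟨mem_ball_self hr0, hF hx₀F⟩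
  -- the graph over `U ∩ F` lies in a strip of height `2 r ^ γ`, cut into bins of height `r`
  set c := f x₀ - r ^ γ
  set N := ⌊2 * r ^ γ / r⌋₊
  have hbin : ∀ y ∈ U ∩ F, 0 ≤ (f y - c) / r ∧ ⌊(f y - c) / r⌋₊ ≤ N := fun y hy => by
    have := abs_le.1 (hosc₀ y hy)
    exact ⟨div_nonneg (by linarith) hr0.le,
      Nat.floor_le_floor (div_le_div_of_nonneg_right (by linarith) hr0.le)⟩
  set B : ℕ → Set (ℝ × ℝ) := fun j => {y ∈ U ∩ F | ⌊(f y - c) / r⌋₊ = j}.graphOn f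
  have hdiam : ∀ j, ediam (B j) ≤ ENNReal.ofReal r := by
    intro j
    refine ediam_le ?_
    rintro _ ⟨y, ⟨hy, hyj⟩, rfl⟩ _ ⟨y', ⟨hy', hy'j⟩, rfl⟩
    obtain ⟨hjy, hyj'⟩ := (Nat.floor_eq_iff (hbin y hy).1).1 hyj
    obtain ⟨hjy', hy'j'⟩ := (Nat.floor_eq_iff (hbin y' hy').1).1 hy'j
    rw [le_div_iff₀ hr0] at hjy hjy'
    rw [div_lt_iff₀ hr0] at hyj' hy'j'
    rw [Prod.edist_eq, max_le_iff, edist_le_ofReal hr0.le, edist_le_ofReal hr0.le]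
    refine ⟨(hdist y hy.1 y' hy'.1).trans (by linarith), ?_⟩
    rw [Real.dist_eq, abs_le]
    constructor <;> linarith
  have hempty : ∀ j, N < j → B j = ∅ := fun j hj =>
    graphOn_eq_empty.2 (eq_empty_of_forall_notMem fun y ⟨hy, hyj⟩ =>
      hj.not_ge (hyj ▸ (hbin y hy).2))
  refine ⟨B, ?_, hdiam, ?_⟩
  · rintro _ ⟨y, hy, rfl⟩
    exact mem_iUnion.2 ⟨_, y, ⟨hy, rfl⟩, rfl⟩
  exact (tsum_ediam_rpow_le_of_eq_empty hr0 (by linarith) hdiam hempty).trans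
    (ENNReal.ofReal_le_ofReal (floor_add_one_mul_rpow_le hr0 hL1 hγ1))

theorem exists_graphOn_inter_cover {F U : Set ℝ} {s δ : ℝ} (hF : F ⊆ Icc 0 1)
    (hosc : ∀ x ∈ F, OscLeRpowAt f γ r₀ x) (hγ1 : γ ≤ 1) (hs : 0 < s)
    (hU : ediam U ≤ ENNReal.ofReal δ) (hδr₀ : 2 * δ < r₀) (hδ1 : 2 * δ ≤ 1) :
    ∃ B : ℕ → Set (ℝ × ℝ), (U ∩ F).graphOn f ⊆ ⋃ j, B j ∧
      (∀ j, ediam (B j) ≤ ENNReal.ofReal (2 * δ)) ∧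
      ∑' j, ediam (B j) ^ (s + 1 - γ) ≤ 3 * 2 ^ s * ediam U ^ s := by
  by_cases hsub : (U ∩ F).Subsingleton
  · have h0 : ediam ((U ∩ F).graphOn f) = 0 := ediam_eq_zero_iff.2 (hsub.image _)
    refine ⟨fun _ => (U ∩ F).graphOn f, subset_iUnion (fun _ => (U ∩ F).graphOn f) 0,
      fun _ => h0.trans_le zero_le, ?_⟩
    simp [h0, ENNReal.zero_rpow_of_pos (by linarith : 0 < s + 1 - γ)]
  obtain ⟨x₀, hx₀, -⟩ := not_subsingleton_iff.1 hsub
  have hUtop : ediam U ≠ ⊤ := ne_top_of_le_ne_top ENNReal.ofReal_ne_top hU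
  set L := (ediam U).toReal
  have hUL : ediam U = ENNReal.ofReal L := (ENNReal.ofReal_toReal hUtop).symm
  have hL : 0 < L :=
    ENNReal.toReal_pos (fun h0 => hsub ((ediam_eq_zero_iff.1 h0).anti inter_subset_left)) hUtop
  have hLδ : L ≤ δ := (ENNReal.ofReal_le_ofReal_iff'.1 (hUL ▸ hU)).resolve_right hL.not_ge
  obtain ⟨B, hcov, hdiam, hsum⟩ := exists_graphOn_inter_cover_of_mem hF hosc hγ1 hs hx₀ hL
    hUL.le (by linarith) (by linarith)
  refine ⟨B, hcov, fun j => (hdiam j).trans (ENNReal.ofReal_le_ofReal (by linarith)),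
    hsum.trans_eq ?_⟩
  rw [hUL, ENNReal.ofReal_mul (by norm_num), ENNReal.ofReal_rpow_of_pos (by positivity),
    Real.mul_rpow zero_le_two hL.le, ENNReal.ofReal_mul (by positivity),
    ← ENNReal.ofReal_rpow_of_pos two_pos, ← ENNReal.ofReal_rpow_of_pos hL, mul_assoc]
  norm_num

theorem hausdorffMeasure_graphOn_le {F : Set ℝ} {s : ℝ} (hF : F ⊆ Icc 0 1)
    (hosc : ∀ x ∈ F, OscLeRpowAt f γ r₀ x) (hr₀ : 0 < r₀) (hγ1 : γ ≤ 1) (hs : 0 < s) :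
    μH[s + 1 - γ] (F.graphOn f) ≤ 3 * 2 ^ s * μH[s] F := by
  have hC0 : (3 * 2 ^ s : ℝ≥0∞) ≠ 0 := by positivity
  have hCtop : (3 * 2 ^ s : ℝ≥0∞) ≠ ⊤ :=
    ENNReal.mul_ne_top (by norm_num) (ENNReal.rpow_ne_top_of_nonneg hs.le (by norm_num))
  simp only [Measure.hausdorffMeasure_apply, ENNReal.mul_iSup, ENNReal.mul_iInf_of_ne hC0 hCtop,
    ← ENNReal.tsum_mul_left]
  refine iSup₂_le fun R hR => ?_
  obtain ⟨ε, hε0, hεR⟩ := ENNReal.lt_iff_exists_nnreal_btwn.1 hR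
  obtain ⟨δ, hδ0, hδε, hδr₀, hδ1⟩ : ∃ δ : ℝ, 0 < δ ∧ 2 * δ ≤ ε ∧ 2 * δ < r₀ ∧ 2 * δ ≤ 1 := by
    have hε : (0 : ℝ) < ε := by exact_mod_cast hε0
    refine ⟨min (ε / 2) (min (r₀ / 4) (1 / 2)), by positivity, ?_, ?_, ?_⟩ <;>
      linarith [min_le_left (ε / 2 : ℝ) (min (r₀ / 4) (1 / 2)),
        min_le_right (ε / 2 : ℝ) (min (r₀ / 4) (1 / 2)), min_le_left (r₀ / 4) (1 / 2 : ℝ),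
        min_le_right (r₀ / 4) (1 / 2 : ℝ)]
  have hδR : ENNReal.ofReal (2 * δ) ≤ R :=
    (ENNReal.ofReal_le_ofReal hδε).trans ((ENNReal.ofReal_coe_nnreal (p := ε)).trans_le hεR.le)
  refine le_iSup₂_of_le (ENNReal.ofReal δ) (ENNReal.ofReal_pos.2 hδ0)
    (le_iInf fun U => le_iInf₂ fun hcov hdiam => ?_)
  choose B hBcov hBdiam hBsum using fun n =>
    exists_graphOn_inter_cover hF hosc hγ1 hs (hdiam n) hδr₀ hδ1
  let e : ℕ ≃ ℕ × ℕ := Nat.pairEquiv.symm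
  refine iInf_le_of_le (fun i => B (e i).1 (e i).2)
    (iInf₂_le_of_le ?_ (fun i => (hBdiam _ _).trans hδR) ?_)
  · rintro _ ⟨x, hx, rfl⟩
    obtain ⟨n, hn⟩ := mem_iUnion.1 (hcov hx)
    obtain ⟨j, hj⟩ := mem_iUnion.1 (hBcov n ⟨x, ⟨hn, hx⟩, rfl⟩)
    exact mem_iUnion.2 ⟨e.symm (n, j), by simpa using hj⟩
  have hU : ∀ n, 3 * 2 ^ s * ediam (U n) ^ s ≤
      ⨆ _ : (U n).Nonempty, 3 * 2 ^ s * ediam (U n) ^ s := fun n => by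
    rcases (U n).eq_empty_or_nonempty with hn | hn
    · simp [hn, ENNReal.zero_rpow_of_pos hs]
    · exact le_iSup (fun _ => 3 * 2 ^ s * ediam (U n) ^ s) hn
  calc ∑' i, ⨆ _ : (B (e i).1 (e i).2).Nonempty, ediam (B (e i).1 (e i).2) ^ (s + 1 - γ)
      ≤ ∑' i, ediam (B (e i).1 (e i).2) ^ (s + 1 - γ) :=
        ENNReal.tsum_le_tsum fun i => iSup_le fun _ => le_rfl
    _ = ∑' n, ∑' j, ediam (B n j) ^ (s + 1 - γ) := by
        rw [e.tsum_eq (fun p => ediam (B p.1 p.2) ^ (s + 1 - γ)), ENNReal.tsum_prod (f := fun n j => ediam (B n j) ^ (s + 1 - γ))]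
    _ ≤ ∑' n, ⨆ _ : (U n).Nonempty, 3 * 2 ^ s * ediam (U n) ^ s :=
        ENNReal.tsum_le_tsum fun n => (hBsum n).trans (hU n)

theorem dimH_graphOn_le_add {F : Set ℝ} (hF : F ⊆ Icc 0 1)
    (hosc : ∀ x ∈ F, OscLeRpowAt f γ r₀ x) (hr₀ : 0 < r₀) (hγ1 : γ ≤ 1) :
    dimH (F.graphOn f) ≤ dimH F + ENNReal.ofReal (1 - γ) := by
  refine dimH_le fun d hd => ?_
  rw [← ENNReal.ofReal_coe_nnreal]
  rcases le_or_gt (d : ℝ) (1 - γ) with hd1 | hd1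
  · exact (ENNReal.ofReal_le_ofReal hd1).trans le_add_self
  set s := (d : ℝ) - (1 - γ)
  have hs : 0 < s := sub_pos.2 hd1
  have hμ : μH[s] F = ⊤ := by
    by_contra hne
    have hle := hausdorffMeasure_graphOn_le hF hosc hr₀ hγ1 hs
    rw [show s + 1 - γ = d by ring, hd, top_le_iff] at hle
    exact ENNReal.mul_ne_top (ENNReal.mul_ne_top (by norm_num)
      (ENNReal.rpow_ne_top_of_nonneg hs.le (by norm_num))) hne hle
  have hsF : ENNReal.ofReal s ≤ dimH F :=
    le_dimH_of_hausdorffMeasure_eq_top (by rwa [Real.coe_toNNReal _ hs.le])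
  calc ENNReal.ofReal d = ENNReal.ofReal s + ENNReal.ofReal (1 - γ) := by
        rw [← ENNReal.ofReal_add hs.le (by linarith), sub_add_cancel]
    _ ≤ dimH F + ENNReal.ofReal (1 - γ) := by gcongr

theorem dimH_graphOn_le_of_lt_holderExp {E : Set ℝ} (hE : E ⊆ Icc 0 1) (hγ0 : 0 < γ)
    (hγ1 : γ ≤ 1) (hγE : ∀ x ∈ E, γ < holderExp f x) :
    dimH (E.graphOn f) ≤ dimH E / ENNReal.ofReal γ ∧
      dimH (E.graphOn f) ≤ dimH E + ENNReal.ofReal (1 - γ) := by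
  set F : ℕ → Set ℝ := fun m => {x ∈ E | OscLeRpowAt f γ (1 / (m + 1)) x}
  have hFE : ∀ m, F m ⊆ E := fun m => sep_subset _ _
  have hgraph : E.graphOn f = ⋃ m, (F m).graphOn f := by
    conv_lhs => rw [← iUnion_setOf_oscLeRpowAt_eq hγ0 hγE]
    exact image_iUnion
  rw [hgraph, dimH_iUnion]
  constructor <;> refine iSup_le fun m => ?_
  · refine (dimH_graphOn_le_div ((hFE m).trans hE) (fun x hx => hx.2) Nat.one_div_pos_of_nat
      hγ0 hγ1).trans ?_
    gcongr
    exact hFE m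
  · refine (dimH_graphOn_le_add ((hFE m).trans hE) (fun x hx => hx.2) Nat.one_div_pos_of_nat
      hγ1).trans ?_
    gcongr
    exact hFE m

theorem dimH_graphOn_le_of_le_holderExp {E : Set ℝ} (hE : E ⊆ Icc 0 1) (hγ0 : 0 < γ)
    (hγ1 : γ ≤ 1) (hγE : ∀ x ∈ E, γ ≤ holderExp f x) :
    dimH (E.graphOn f) ≤ dimH E / ENNReal.ofReal γ ∧
      dimH (E.graphOn f) ≤ dimH E + ENNReal.ofReal (1 - γ) := by
  have hlt : ∀ β ∈ Ioo 0 γ, dimH (E.graphOn f) ≤ dimH E / ENNReal.ofReal β ∧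
      dimH (E.graphOn f) ≤ dimH E + ENNReal.ofReal (1 - β) := fun β hβ =>
    dimH_graphOn_le_of_lt_holderExp hE hβ.1 (hβ.2.le.trans hγ1)
      fun x hx => hβ.2.trans_le (hγE x hx)
  refine ⟨le_of_forall_mem_Ioo_le_of_continuousAt hγ0 ?_ fun β hβ => (hlt β hβ).1,
    le_of_forall_mem_Ioo_le_of_continuousAt hγ0 ?_ fun β hβ => (hlt β hβ).2⟩
  · exact ENNReal.Tendsto.div tendsto_const_nhds (Or.inr (ENNReal.ofReal_pos.2 hγ0).ne')
      (ENNReal.continuous_ofReal.tendsto γ) (Or.inl ENNReal.ofReal_ne_top)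
  · exact (continuous_const.add
      (ENNReal.continuous_ofReal.comp (continuous_const.sub continuous_id))).continuousAt

end GraphDimension

theorem graph_dimension_upper_bound
    (f : ℝ → ℝ) (E : Set ℝ) (hE : E ⊆ Set.Icc 0 1)
    (h : ℝ) (hpos : 0 < h) (hinf : sInf (holderExp f '' E) = h) :
    dimH ((fun x => (x, f x)) '' E) ≤
      max (min (dimH E / ENNReal.ofReal h) (dimH E + 1 - ENNReal.ofReal h)) (dimH E) := by
  have hbdd : BddBelow (holderExp f '' E) := by
    by_contra hb
    rw [Real.sInf_of_not_bddBelow hb] at hinf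
    exact hpos.ne hinf
  have hexp : ∀ x ∈ E, h ≤ holderExp f x := fun x hx =>
    hinf ▸ csInf_le hbdd (mem_image_of_mem _ hx)
  obtain ⟨hdiv, hadd⟩ := dimH_graphOn_le_of_le_holderExp hE (lt_min hpos one_pos)
    (min_le_right h 1) fun x hx => (min_le_left h 1).trans (hexp x hx)
  rcases le_or_gt h 1 with h1 | h1
  · rw [min_eq_left h1] at hdiv hadd
    refine le_max_of_le_left (le_min hdiv (hadd.trans_eq ?_))
    rw [ENNReal.ofReal_sub _ hpos.le, ENNReal.ofReal_one, ← (ENNReal.cancel_of_ne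
      ENNReal.ofReal_ne_top).add_tsub_assoc_of_le (ENNReal.ofReal_le_one.2 h1)]
  · rw [min_eq_right h1.le, ENNReal.ofReal_one, div_one] at hdiv
    exact le_max_of_le_right hdiv
end
end

section
/- Let f : [0,1] → ℝ and E ⊆ [0,1] be such that inf_{x∈E} h_f(x) = h for some h > 0. Then the Hausdorff dimension of the range of f over E satisfies dim_H {f(x) : x ∈ E} ≤ min( (dim_H E)/h , 1 ). -/
/-!
If every point of `E` has Hölder exponent above `α > 0`, then around each `x ∈ E` the oscillation
of `f` on `B(x, r)` is at most `r ^ α` for all small `r`. Grouping the points of `E` by how small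
`r` has to be splits `E` into countably many pieces on each of which `f` is locally `α`-Hölder, so
`dim_H f(E) ≤ dim_H E / α`; letting `α` increase to `h` gives the bound, and `dim_H f(E) ≤ 1`
holds for any subset of `ℝ`.
-/

open MeasureTheory Filter Set

noncomputable section

open scoped NNReal ENNReal Topology

open Metric Real

section HolderDimension

variable {X Y : Type*}

lemma holderOnWith_of_dist_le [PseudoMetricSpace X] [PseudoMetricSpace Y] {C r : ℝ≥0}
    {f : X → Y} {s : Set X} (h : ∀ x ∈ s, ∀ y ∈ s, dist (f x) (f y) ≤ C * dist x y ^ (r : ℝ)) :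
    HolderOnWith C r f s := by
  intro x hx y hy
  rw [edist_nndist, edist_nndist, ← ENNReal.coe_rpow_of_nonneg _ r.coe_nonneg, ← ENNReal.coe_mul,
    ENNReal.coe_le_coe, ← NNReal.coe_le_coe]
  push_cast
  exact h x hx y hy

/-- Doubling the scale puts both points in a ball centred at one of them. -/
lemma holderOnWith_inter_ball_of_forall_dist_le_rpow [MetricSpace X] [PseudoMetricSpace Y]
    {f : X → Y} {s : Set X} {α : ℝ≥0} {δ : ℝ}
    (hf : ∀ x ∈ s, ∀ r ∈ Ioo 0 δ, ∀ y ∈ s ∩ ball x r, dist (f x) (f y) ≤ r ^ (α : ℝ)) (x : X) :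
    HolderOnWith (2 ^ (α : ℝ)) α f (s ∩ ball x (δ / 4)) := by
  refine holderOnWith_of_dist_le fun y hy z hz => ?_
  rcases eq_or_ne y z with rfl | hyz
  · simp only [dist_self]
    positivity
  have hyz_pos : 0 < dist y z := dist_pos.2 hyz
  have hyz_lt : dist y z < δ / 2 := by
    linarith [dist_triangle y x z, mem_ball.1 hy.2, mem_ball'.1 hz.2]
  calc dist (f y) (f z) ≤ (2 * dist y z) ^ (α : ℝ) :=
        hf y hy.1 _ ⟨by positivity, by linarith⟩ z ⟨hz.1, by rw [mem_ball, dist_comm]; linarith⟩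
    _ = ((2 : ℝ≥0) ^ (α : ℝ) : ℝ≥0) * dist y z ^ (α : ℝ) := by
        rw [mul_rpow zero_le_two dist_nonneg, NNReal.coe_rpow, NNReal.coe_ofNat]

theorem dimH_image_le_of_eventually_dist_le_rpow [MetricSpace X] [SecondCountableTopology X]
    [MetricSpace Y] {f : X → Y} {s : Set X} {α : ℝ≥0} (hα : 0 < α)
    (hf : ∀ x ∈ s, ∀ᶠ r in 𝓝[>] 0, ∀ y ∈ s ∩ ball x r, dist (f x) (f y) ≤ r ^ (α : ℝ)) :
    dimH (f '' s) ≤ dimH s / α := by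
  set t : ℕ → Set X := fun n => {x ∈ s | ∀ r ∈ Ioo 0 ((n : ℝ) + 1)⁻¹,
    ∀ y ∈ s ∩ ball x r, dist (f x) (f y) ≤ r ^ (α : ℝ)}
  have hs_sub : s ⊆ ⋃ n, t n := by
    intro x hx
    obtain ⟨u, hu, hsub⟩ := mem_nhdsGT_iff_exists_Ioo_subset.1 (hf x hx)
    obtain ⟨n, hn⟩ := exists_nat_one_div_lt (mem_Ioi.1 hu)
    refine mem_iUnion.2 ⟨n, hx, fun r hr => hsub ⟨hr.1, hr.2.trans ?_⟩⟩
    rwa [← one_div]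
  have ht : ∀ n, dimH (f '' t n) ≤ dimH s / α := fun n =>
    (dimH_image_le_of_locally_holder_on hα fun x _ =>
        ⟨_, t n ∩ ball x (((n : ℝ) + 1)⁻¹ / 4),
          inter_mem_nhdsWithin _ (ball_mem_nhds x (by positivity)),
          holderOnWith_inter_ball_of_forall_dist_le_rpow
            (fun y hy r hr z hz => hy.2 r hr z ⟨hz.1.1, hz.2⟩) x⟩).trans
      (ENNReal.div_le_div_right (dimH_mono (sep_subset _ _)) _)
  calc dimH (f '' s) ≤ dimH (⋃ n, f '' t n) := by
        rw [← image_iUnion]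
        exact dimH_mono (image_mono hs_sub)
    _ ≤ dimH s / α := by
        rw [dimH_iUnion]
        exact iSup_le ht

end HolderDimension

lemma ENNReal.le_div_coe_of_forall_lt {a b : ℝ≥0∞} {c : ℝ≥0} (hc : c ≠ 0)
    (h : ∀ d : ℝ≥0, 0 < d → d < c → a ≤ b / d) : a ≤ b / c := by
  rw [ENNReal.le_div_iff_mul_le (Or.inl (ENNReal.coe_ne_zero.2 hc)) (Or.inl ENNReal.coe_ne_top)]
  refine ENNReal.mul_le_of_forall_lt fun a' ha' d' hd' => ?_
  lift d' to ℝ≥0 using (hd'.trans ENNReal.coe_lt_top).ne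
  rcases eq_or_ne d' 0 with rfl | hd0
  · simp
  have hd0' : (d' : ℝ≥0∞) ≠ 0 := ENNReal.coe_ne_zero.2 hd0
  calc a' * d' ≤ a * d' := mul_le_mul_left ha'.le _
    _ ≤ b := (ENNReal.le_div_iff_mul_le (Or.inl hd0') (Or.inl ENNReal.coe_ne_top)).1
        (h d' (pos_iff_ne_zero.2 hd0) (ENNReal.coe_lt_coe.1 hd'))

lemma abs_sub_le_rpow_of_le_log_oscil_div_log (f : ℝ → ℝ) {x r α : ℝ} (hr0 : 0 < r)
    (hr1 : r < 1) (hα : 0 < α) (hle : α ≤ log (oscil f x r) / log r) {s t : ℝ}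
    (hs : s ∈ ball x r ∩ Icc 0 1) (ht : t ∈ ball x r ∩ Icc 0 1) :
    |f s - f t| ≤ r ^ α := by
  have hlog : log (oscil f x r) ≤ α * log r := (le_div_iff_of_neg (log_neg hr0 hr1)).1 hle
  have hneg : log (oscil f x r) < 0 := hlog.trans_lt (mul_neg_of_pos_of_neg hα (log_neg hr0 hr1))
  -- `hneg` excludes `oscil f x r = 0`, the value `sSup` takes on a set unbounded above.
  have hbdd : BddAbove ((fun p : ℝ × ℝ => |f p.1 - f p.2|) ''
      ((ball x r ∩ Icc 0 1) ×ˢ (ball x r ∩ Icc 0 1))) := by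
    by_contra hB
    rw [oscil, Real.sSup_of_not_bddAbove hB, log_zero] at hneg
    exact hneg.false
  have hosc_pos : 0 < oscil f x r := by
    refine (le_csSup hbdd ⟨(s, s), ⟨hs, hs⟩, by simp⟩).lt_of_ne fun h0 => ?_
    rw [oscil, ← h0, log_zero] at hneg
    exact hneg.false
  calc |f s - f t| ≤ oscil f x r := le_csSup hbdd ⟨(s, t), ⟨hs, ht⟩, rfl⟩
    _ = exp (log (oscil f x r)) := (exp_log hosc_pos).symm
    _ ≤ exp (α * log r) := exp_le_exp.2 hlog
    _ = r ^ α := by rw [rpow_def_of_pos hr0, mul_comm]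

lemma eventually_abs_sub_le_rpow_of_lt_holderExp {f : ℝ → ℝ} {x α : ℝ} (hx : x ∈ Icc 0 1)
    (hα : 0 < α) (hαx : α < holderExp f x) :
    ∀ᶠ r in 𝓝[>] 0, ∀ y ∈ ball x r ∩ Icc 0 1, |f x - f y| ≤ r ^ α := by
  have hbdd : IsBoundedUnder (· ≥ ·) (𝓝[>] 0) fun r => log (oscil f x r) / log r := by
    by_contra hB
    rw [holderExp, Real.liminf_of_not_isBoundedUnder hB] at hαx
    linarith
  filter_upwards [eventually_lt_of_lt_liminf hαx hbdd, Ioo_mem_nhdsGT one_pos]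
    with r hr hr1 y hy
  exact abs_sub_le_rpow_of_le_log_oscil_div_log f hr1.1 hr1.2 hα hr.le
    ⟨mem_ball_self hr1.1, hx⟩ hy

theorem range_dimension_upper_bound
    (f : ℝ → ℝ) (E : Set ℝ) (hE : E ⊆ Set.Icc 0 1)
    (h : ℝ) (hpos : 0 < h) (hinf : sInf (holderExp f '' E) = h) :
    dimH (f '' E) ≤ min (dimH E / ENNReal.ofReal h) 1 := by
  refine le_min ?_ ((dimH_mono (subset_univ _)).trans Real.dimH_univ.le)
  have h_le : ∀ x ∈ E, h ≤ holderExp f x := by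
    have hbdd : BddBelow (holderExp f '' E) := by
      by_contra hB
      rw [Real.sInf_of_not_bddBelow hB] at hinf
      linarith
    exact fun x hx => hinf ▸ csInf_le hbdd (mem_image_of_mem _ hx)
  refine ENNReal.le_div_coe_of_forall_lt (Real.toNNReal_pos.2 hpos).ne' fun α hα hαh => ?_
  refine dimH_image_le_of_eventually_dist_le_rpow hα fun x hx => ?_
  have hαx : (α : ℝ) < holderExp f x := (Real.lt_toNNReal_iff_coe_lt.1 hαh).trans_le (h_le x hx)
  filter_upwards [eventually_abs_sub_le_rpow_of_lt_holderExp (hE hx) hα hαx] with r hr y hy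
  exact hr y ⟨hy.2, hE hy.1⟩
end
end

section
/- Let X ⊆ Σ be nonempty, φ : Σ → ℝ, q ∈ ℝ, and suppose μ is a probability measure with μ(X) = 1 which is C₁-Gibbs on X for φ with pressure P₁, and ν is a probability measure with ν(X) = 1 which is C₂-Gibbs on X for qφ with pressure P₂. Then the limit lim_{n→∞} −(1/n) log₂ Σ_{w ∈ {0,1}^n : μ([w]) ≠ 0} μ([w])^q exists and equals (qP₁ − P₂)/log 2. -/
open MeasureTheory Filter Set

noncomputable section

open scoped Classical in
noncomputable def powSum (μ : Measure Sig) (n : ℕ) (q : ℝ) : ℝ :=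
  ∑ w : Fin n → Bool, if μ (cylF w) ≠ 0 then (μ (cylF w)).toReal ^ q else 0

/-!
Write `a ≍ b` for equality up to a factor bounded independently of `n`. At a point
`t ∈ X ∩ [w]` the two Gibbs bounds give `μ[w] ≍ exp (S_n φ t - n P₁)` and
`ν[w] ≍ exp (q S_n φ t - n P₂)`, hence `μ[w]^q ≍ ν[w] · exp (n (P₂ - q P₁))` with constant
`C₁^|q| C₂`; cylinders missing `X` are null for both measures. Summing over words and using
`∑ ν[w] = 1` gives `powSum μ n q ≍ exp (n (P₂ - q P₁))`, so
`log (powSum μ n q) = n (P₂ - q P₁) + O(1)`.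
-/

lemma Real.rpow_bounds_of_bounds {C x y : ℝ} (hC : 0 < C) (hy : 0 < y)
    (h₁ : C⁻¹ * y ≤ x) (h₂ : x ≤ C * y) (q : ℝ) :
    (C ^ |q|)⁻¹ * y ^ q ≤ x ^ q ∧ x ^ q ≤ C ^ |q| * y ^ q := by
  have hlow : 0 < C⁻¹ * y := by positivity
  have hx : 0 < x := hlow.trans_le h₁
  rcases le_total 0 q with hq | hq
  · rw [abs_of_nonneg hq, ← Real.inv_rpow hC.le, ← Real.mul_rpow (inv_nonneg.2 hC.le) hy.le,
      ← Real.mul_rpow hC.le hy.le]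
    exact ⟨Real.rpow_le_rpow hlow.le h₁ hq, Real.rpow_le_rpow hx.le h₂ hq⟩
  · rw [abs_of_nonpos hq, Real.rpow_neg hC.le, inv_inv, ← Real.inv_rpow hC.le,
      ← Real.mul_rpow hC.le hy.le, ← Real.mul_rpow (inv_nonneg.2 hC.le) hy.le]
    exact ⟨Real.rpow_le_rpow_of_nonpos hx h₂ hq, Real.rpow_le_rpow_of_nonpos hlow h₁ hq⟩

lemma abs_log_sub_le_log_of_bounds {K x b : ℝ} (hK : 0 < K)
    (h₁ : K⁻¹ * Real.exp b ≤ x) (h₂ : x ≤ K * Real.exp b) : |Real.log x - b| ≤ Real.log K := by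
  have hx : 0 < x := (by positivity : 0 < K⁻¹ * Real.exp b).trans_le h₁
  have hlow := Real.log_le_log (by positivity) h₁
  have hup := Real.log_le_log hx h₂
  rw [Real.log_mul (by positivity) (by positivity), Real.log_inv, Real.log_exp] at hlow
  rw [Real.log_mul hK.ne' (by positivity), Real.log_exp] at hup
  rw [abs_le]
  constructor <;> linarith

lemma tendsto_div_natCast_of_abs_sub_mul_le {g : ℕ → ℝ} {a L : ℝ}
    (h : ∀ n : ℕ, |g n - n * a| ≤ L) : Tendsto (fun n : ℕ => g n / n) atTop (nhds a) := by
  rw [tendsto_iff_norm_sub_tendsto_zero]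
  refine squeeze_zero_norm' ?_ (tendsto_const_div_atTop_nhds_zero_nat L)
  filter_upwards [eventually_ge_atTop 1] with n hn
  have hn : (0 : ℝ) < n := by exact_mod_cast hn
  rw [norm_norm, Real.norm_eq_abs, show g n / n - a = (g n - n * a) / n by field_simp,
    abs_div, Nat.abs_cast]
  exact div_le_div_of_nonneg_right (h n) hn.le

lemma birkhoff_const_mul (c : ℝ) (φ : Sig → ℝ) (n : ℕ) (t : Sig) :
    birkhoff (fun s => c * φ s) n t = c * birkhoff φ n t := by
  simp only [birkhoff, Finset.mul_sum]

lemma cylN_zero (t : Sig) : cylN t 0 = univ := by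
  ext s
  simp [cylN]

lemma cylF_eq_cylN {n : ℕ} {w : Fin n → Bool} {t : Sig} (ht : t ∈ cylF w) :
    cylF w = cylN t n := by
  ext s
  constructor
  · intro hs i hi
    rw [hs ⟨i, hi⟩, ht ⟨i, hi⟩]
  · intro hs i
    rw [hs i i.isLt, ht i]

lemma cylF_eq_preimage {n : ℕ} (w : Fin n → Bool) :
    cylF w = (fun t : Sig => (fun i : Fin n => t i)) ⁻¹' {w} := by
  ext t
  simp [cylF, funext_iff]

lemma measurableSet_cylF {n : ℕ} (w : Fin n → Bool) : MeasurableSet (cylF w) := by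
  rw [cylF_eq_preimage]
  exact measurable_pi_lambda _ (fun i => measurable_pi_apply _) (measurableSet_singleton w)

lemma sum_measure_cylF (m : Measure Sig) (n : ℕ) :
    ∑ w : Fin n → Bool, m (cylF w) = m univ := by
  simp_rw [cylF_eq_preimage]
  rw [sum_measure_preimage_singleton _ fun w _ => cylF_eq_preimage w ▸ measurableSet_cylF w]
  simp

lemma measure_cylF_eq_zero_of_disjoint {m : Measure Sig} [IsProbabilityMeasure m] {X : Set Sig}
    (hX : m X = 1) {n : ℕ} {w : Fin n → Bool} (h : Disjoint (cylF w) X) : m (cylF w) = 0 :=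
  (prob_compl_eq_one_iff (measurableSet_cylF w)).1 <|
    le_antisymm prob_le_one (hX ▸ measure_mono h.subset_compl_left)

lemma GibbsOn.one_le {X : Set Sig} {φ : Sig → ℝ} {C P : ℝ} {μ : Measure Sig}
    [IsProbabilityMeasure μ] (h : GibbsOn X φ C P μ) {t : Sig} (ht : t ∈ X) : 1 ≤ C := by
  simpa [cylN_zero, birkhoff] using (h t ht 0 t (by simp [cylN_zero])).2

lemma GibbsOn.measure_cylN_ne_zero {X : Set Sig} {φ : Sig → ℝ} {C P : ℝ} {μ : Measure Sig}
    (h : GibbsOn X φ C P μ) (hC : 0 < C) {t : Sig} (ht : t ∈ X) (n : ℕ) :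
    μ (cylN t n) ≠ 0 := by
  intro h0
  have hlow := (h t ht n t fun _ _ => rfl).1
  rw [h0, ENNReal.toReal_zero] at hlow
  exact hlow.not_gt (by positivity)

lemma rpow_measure_cylF_bounds {X : Set Sig} {φ : Sig → ℝ} {q C₁ C₂ P₁ P₂ : ℝ}
    {μ ν : Measure Sig} (hC₁ : 0 < C₁) (hC₂ : 0 < C₂)
    (hμ : GibbsOn X φ C₁ P₁ μ) (hν : GibbsOn X (fun t => q * φ t) C₂ P₂ ν)
    {n : ℕ} {w : Fin n → Bool} {t : Sig} (htw : t ∈ cylF w) (htX : t ∈ X) :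
    (C₁ ^ |q| * C₂)⁻¹ * ((ν (cylF w)).toReal * Real.exp (n * (P₂ - q * P₁))) ≤
        (μ (cylF w)).toReal ^ q ∧
      (μ (cylF w)).toReal ^ q ≤
        C₁ ^ |q| * C₂ * ((ν (cylF w)).toReal * Real.exp (n * (P₂ - q * P₁))) := by
  obtain ⟨hμ₁, hμ₂⟩ := hμ t htX n t fun _ _ => rfl
  obtain ⟨hν₁, hν₂⟩ := hν t htX n t fun _ _ => rfl
  rw [← cylF_eq_cylN htw] at hμ₁ hμ₂ hν₁ hν₂
  rw [birkhoff_const_mul] at hν₁ hν₂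
  obtain ⟨hlow, hup⟩ := Real.rpow_bounds_of_bounds hC₁ (Real.exp_pos _) hμ₁ hμ₂ q
  have hsplit : Real.exp (birkhoff φ n t - n * P₁) ^ q =
      Real.exp (q * birkhoff φ n t - n * P₂) * Real.exp (n * (P₂ - q * P₁)) := by
    rw [← Real.exp_mul, ← Real.exp_add]
    ring_nf
  rw [hsplit] at hlow hup
  constructor
  · calc _ = (C₁ ^ |q|)⁻¹ * ((C₂⁻¹ * (ν (cylF w)).toReal) * Real.exp (n * (P₂ - q * P₁))) := by
          ring
      _ ≤ _ := by gcongr; exact (inv_mul_le_iff₀ hC₂).2 hν₂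
      _ ≤ _ := hlow
  · calc _ ≤ _ := hup
      _ ≤ C₁ ^ |q| * ((C₂ * (ν (cylF w)).toReal) * Real.exp (n * (P₂ - q * P₁))) := by
          gcongr; exact (inv_mul_le_iff₀ hC₂).1 hν₁
      _ = _ := by ring

lemma powSum_bounds {X : Set Sig} {φ : Sig → ℝ} {q C₁ C₂ P₁ P₂ : ℝ}
    {μ ν : Measure Sig} [IsProbabilityMeasure μ] [IsProbabilityMeasure ν]
    (hμX : μ X = 1) (hνX : ν X = 1) (hC₁ : 0 < C₁) (hC₂ : 0 < C₂)
    (hμ : GibbsOn X φ C₁ P₁ μ) (hν : GibbsOn X (fun t => q * φ t) C₂ P₂ ν) (n : ℕ) :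
    (C₁ ^ |q| * C₂)⁻¹ * Real.exp (n * (P₂ - q * P₁)) ≤ powSum μ n q ∧
      powSum μ n q ≤ C₁ ^ |q| * C₂ * Real.exp (n * (P₂ - q * P₁)) := by
  classical
  set E := Real.exp (n * (P₂ - q * P₁))
  have hterm : ∀ w : Fin n → Bool,
      (C₁ ^ |q| * C₂)⁻¹ * ((ν (cylF w)).toReal * E) ≤
          (if μ (cylF w) ≠ 0 then (μ (cylF w)).toReal ^ q else 0) ∧
        (if μ (cylF w) ≠ 0 then (μ (cylF w)).toReal ^ q else 0) ≤
          C₁ ^ |q| * C₂ * ((ν (cylF w)).toReal * E) := by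
    intro w
    by_cases hw : Disjoint (cylF w) X
    · simp [measure_cylF_eq_zero_of_disjoint hμX hw, measure_cylF_eq_zero_of_disjoint hνX hw]
    · obtain ⟨t, htw, htX⟩ := Set.not_disjoint_iff.1 hw
      rw [if_pos (cylF_eq_cylN htw ▸ hμ.measure_cylN_ne_zero hC₁ htX n)]
      exact rpow_measure_cylF_bounds hC₁ hC₂ hμ hν htw htX
  have hν₁ : ∑ w : Fin n → Bool, (ν (cylF w)).toReal * E = E := by
    rw [← Finset.sum_mul, ← ENNReal.toReal_sum fun _ _ => measure_ne_top _ _,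
      sum_measure_cylF, measure_univ, ENNReal.toReal_one, one_mul]
  constructor
  · calc _ = ∑ w : Fin n → Bool, (C₁ ^ |q| * C₂)⁻¹ * ((ν (cylF w)).toReal * E) := by
          rw [← Finset.mul_sum, hν₁]
      _ ≤ powSum μ n q := Finset.sum_le_sum fun w _ => (hterm w).1
  · calc powSum μ n q ≤ ∑ w : Fin n → Bool, C₁ ^ |q| * C₂ * ((ν (cylF w)).toReal * E) :=
          Finset.sum_le_sum fun w _ => (hterm w).2
      _ = _ := by rw [← Finset.mul_sum, hν₁]

theorem renyi_entropy_of_gibbs_general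
    (X : Set Sig) (φ : Sig → ℝ) (q : ℝ)
    (C₁ C₂ P₁ P₂ : ℝ)
    (μ ν : Measure Sig) [IsProbabilityMeasure μ] [IsProbabilityMeasure ν]
    (hμX : μ X = 1) (hνX : ν X = 1)
    (hμ : GibbsOn X φ C₁ P₁ μ)
    (hν : GibbsOn X (fun t => q * φ t) C₂ P₂ ν) :
    Tendsto (fun n : ℕ => -(1 / (n:ℝ)) * Real.logb 2 (powSum μ n q)) atTop
      (nhds ((q * P₁ - P₂) / Real.log 2)) := by
  obtain ⟨t, htX⟩ := nonempty_of_measure_ne_zero (hμX.trans_ne one_ne_zero)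
  have hC₁ : 0 < C₁ := zero_lt_one.trans_le (hμ.one_le htX)
  have hC₂ : 0 < C₂ := zero_lt_one.trans_le (hν.one_le htX)
  have hlog : Tendsto (fun n : ℕ => Real.log (powSum μ n q) / n) atTop (nhds (P₂ - q * P₁)) :=
    tendsto_div_natCast_of_abs_sub_mul_le fun n =>
      have h := powSum_bounds hμX hνX hC₁ hC₂ hμ hν n
      abs_log_sub_le_log_of_bounds (by positivity) h.1 h.2
  convert hlog.neg.div_const (Real.log 2) using 1
  · ext n
    rw [Real.logb]
    ring
  · rw [neg_sub]

theorem renyi_entropy_of_gibbs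
    (X : Set Sig) (hXne : X.Nonempty) (φ : Sig → ℝ) (q : ℝ)
    (C₁ C₂ P₁ P₂ : ℝ) (hC₁ : 1 ≤ C₁) (hC₂ : 1 ≤ C₂)
    (μ ν : Measure Sig) [IsProbabilityMeasure μ] [IsProbabilityMeasure ν]
    (hμX : μ X = 1) (hνX : ν X = 1)
    (hμ : GibbsOn X φ C₁ P₁ μ)
    (hν : GibbsOn X (fun t => q * φ t) C₂ P₂ ν) :
    Tendsto (fun n : ℕ => -(1 / (n:ℝ)) * Real.logb 2 (powSum μ n q)) atTop
      (nhds ((q * P₁ - P₂) / Real.log 2)) :=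
  renyi_entropy_of_gibbs_general X φ q C₁ C₂ P₁ P₂ μ ν hμX hνX hμ hν
end
end

section
/- Let k ≥ 2 and let F ⊆ {0,1}^k be a set of forbidden words such that for every w ∈ F, the word w* defined by w*_i = w_i for 1 ≤ i ≤ k−1 and w*_k = 1 − w_k does not belong to F. Let X = { t ∈ Σ : for all m ≥ 0, (t_{m+1}, …, t_{m+k}) ∉ F }. Then X is nonempty; moreover for every word u ∈ {0,1}^{k−1} there exists t ∈ X whose first k−1 letters equal u, and consequently the Hausdorff distance (with respect to ρ) between X and Σ is at most 2^{-(k−1)}. -/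
open MeasureTheory Filter Set

noncomputable section

/-! By `hF`, flipping the last letter of a forbidden word gives an allowed one, so every `k - 1`
letters have an allowed continuation. Hence from any prefix `u` a sequence avoiding `F` is built
greedily, letter by letter, and every point of `Σ` lies within `2^{-(k-1)}` of such a sequence
sharing its first `k - 1` letters. -/

section GreedyConstruction

variable {k : ℕ}

def window (t : Sig) (m : ℕ) : Fin k → Bool := fun i => t (m + i)

def withLast (w : Fin k → Bool) (b : Bool) : Fin k → Bool :=
  fun i => if (i : ℕ) = k - 1 then b else w i

lemma window_eq_withLast (t : Sig) (m : ℕ) :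
    (window t m : Fin k → Bool) = withLast (window t m) (t (m + (k - 1))) := by
  funext i
  by_cases hi : (i : ℕ) = k - 1 <;> simp [window, withLast, hi]

lemma withLast_true_not_mem_of_flip_not_mem {F : Set (Fin k → Bool)}
    (hF : ∀ w ∈ F, (fun i : Fin k => if (i : ℕ) = k - 1 then !(w i) else w i) ∉ F)
    (w : Fin k → Bool) (hw : withLast w false ∈ F) : withLast w true ∉ F := by
  convert hF _ hw using 2
  funext i
  by_cases hi : (i : ℕ) = k - 1 <;> simp [withLast, hi]

open Classical in
/-- The prefix `u`, followed at each position by `false` unless that completes a word of `F`. -/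
def greedyAvoid (F : Set (Fin k → Bool)) (u : Fin (k - 1) → Bool) : Sig
  | n =>
    if h : n < k - 1 then u ⟨n, h⟩
    else decide ((fun i : Fin k =>
      if hi : (i : ℕ) < k - 1 then greedyAvoid F u (n - (k - 1) + i) else false) ∈ F)
  termination_by n => n
  decreasing_by omega

lemma greedyAvoid_of_lt (F : Set (Fin k → Bool)) (u : Fin (k - 1) → Bool) (i : Fin (k - 1)) :
    greedyAvoid F u i = u i := by
  rw [greedyAvoid, dif_pos i.isLt]

open Classical in
lemma greedyAvoid_add_pred (F : Set (Fin k → Bool)) (u : Fin (k - 1) → Bool) (m : ℕ) :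
    greedyAvoid F u (m + (k - 1)) = decide (withLast (window (greedyAvoid F u) m) false ∈ F) := by
  rw [greedyAvoid, dif_neg (by omega), Nat.add_sub_cancel]
  congr 2
  funext i
  by_cases hi : (i : ℕ) = k - 1
  · simp [withLast, hi]
  · have hlt : (i : ℕ) < k - 1 := by omega
    simp [withLast, window, hi, hlt]

theorem greedyAvoid_window_not_mem {F : Set (Fin k → Bool)} (u : Fin (k - 1) → Bool)
    (hF : ∀ w, withLast w false ∈ F → withLast w true ∉ F) (m : ℕ) :
    window (greedyAvoid F u) m ∉ F := by
  rw [window_eq_withLast (greedyAvoid F u) m, greedyAvoid_add_pred]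
  by_cases h : withLast (window (greedyAvoid F u) m) false ∈ F
  · simpa [h] using hF _ h
  · simp [h]

end GreedyConstruction

lemma rho_nonneg (s t : Sig) : 0 ≤ rho s t :=
  Real.sInf_nonneg <| by rintro r ⟨n, rfl, -⟩; positivity

lemma rho_le_of_forall_lt_eq {s t : Sig} {n : ℕ} (h : ∀ i < n, s i = t i) :
    rho s t ≤ 2 ^ (-(n : ℤ)) :=
  csInf_le ⟨0, by rintro r ⟨m, rfl, -⟩; positivity⟩ ⟨n, rfl, h⟩

lemma biInf_le_of_nonneg {α : Type*} {f : α → ℝ} (hf : ∀ x, 0 ≤ f x) {S : Set α} {x : α}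
    (hx : x ∈ S) : ⨅ y ∈ S, f y ≤ f x :=
  ciInf₂_le ⟨0, by simp [mem_lowerBounds, hf]⟩ x hx

lemma distH_le {A B : Set Sig} {r : ℝ} (hr : 0 ≤ r)
    (hAB : ∀ a ∈ A, ∃ b ∈ B, rho a b ≤ r)
    (hBA : ∀ b ∈ B, ∃ a ∈ A, rho a b ≤ r) :
    distH A B ≤ r := by
  refine max_le (Real.iSup_le (fun a => Real.iSup_le (fun ha => ?_) hr) hr)
    (Real.iSup_le (fun b => Real.iSup_le (fun hb => ?_) hr) hr)
  · obtain ⟨b, hb, hab⟩ := hAB a ha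
    exact (biInf_le_of_nonneg (rho_nonneg a) hb).trans hab
  · obtain ⟨a, ha, hab⟩ := hBA b hb
    exact (biInf_le_of_nonneg (rho_nonneg · b) ha).trans hab

theorem subshift_avoiding_forbidden_words_nonempty_general
    (k : ℕ) (F : Set (Fin k → Bool))
    (hF : ∀ w ∈ F, (fun i : Fin k => if (i : ℕ) = k - 1 then !(w i) else w i) ∉ F) :
    {t : Sig | ∀ m : ℕ, (fun i : Fin k => t (m + i)) ∉ F}.Nonempty ∧
    (∀ u : Fin (k-1) → Bool,
      ∃ t ∈ {t : Sig | ∀ m : ℕ, (fun i : Fin k => t (m + i)) ∉ F},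
        ∀ i : Fin (k-1), t i = u i) ∧
    distH {t : Sig | ∀ m : ℕ, (fun i : Fin k => t (m + i)) ∉ F} Set.univ
      ≤ (2:ℝ) ^ (-((k:ℤ) - 1)) := by
  have hprefix : ∀ u : Fin (k - 1) → Bool,
      ∃ t ∈ {t : Sig | ∀ m : ℕ, (fun i : Fin k => t (m + i)) ∉ F},
        ∀ i : Fin (k - 1), t i = u i :=
    fun u => ⟨greedyAvoid F u,
      greedyAvoid_window_not_mem u (withLast_true_not_mem_of_flip_not_mem hF),
      greedyAvoid_of_lt F u⟩
  have hclose : ∀ s t : Sig, (∀ i < k - 1, s i = t i) →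
      rho s t ≤ (2:ℝ) ^ (-((k:ℤ) - 1)) :=
    fun s t h => (rho_le_of_forall_lt_eq h).trans (zpow_le_zpow_right₀ one_le_two (by omega))
  obtain ⟨t₀, ht₀, -⟩ := hprefix fun _ => false
  refine ⟨⟨t₀, ht₀⟩, hprefix, distH_le (by positivity)
    (fun a _ => ⟨a, mem_univ a, hclose a a fun _ _ => rfl⟩) fun b _ => ?_⟩
  obtain ⟨t, htX, htb⟩ := hprefix fun i => b i
  exact ⟨t, htX, hclose t b fun i hi => htb ⟨i, hi⟩⟩

theorem subshift_avoiding_forbidden_words_nonempty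
    (k : ℕ) (hk : 2 ≤ k) (F : Set (Fin k → Bool))
    (hF : ∀ w ∈ F, (fun i : Fin k => if (i : ℕ) = k - 1 then !(w i) else w i) ∉ F) :
    {t : Sig | ∀ m : ℕ, (fun i : Fin k => t (m + i)) ∉ F}.Nonempty ∧
    (∀ u : Fin (k-1) → Bool,
      ∃ t ∈ {t : Sig | ∀ m : ℕ, (fun i : Fin k => t (m + i)) ∉ F},
        ∀ i : Fin (k-1), t i = u i) ∧
    distH {t : Sig | ∀ m : ℕ, (fun i : Fin k => t (m + i)) ∉ F} Set.univ
      ≤ (2:ℝ) ^ (-((k:ℤ) - 1)) :=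
  subshift_avoiding_forbidden_words_nonempty_general k F hF
end
end

section
/- Let s, t ∈ Σ with λ(s) ≠ λ(t). Then there exists a unique p ≥ 1 such that (s|_{p+1}, t|_{p+1}) ∈ 𝒫_p. Moreover, for this p, every s' ∈ [s|_{p+1}] and t' ∈ [t|_{p+1}] satisfy 2^{-p-1} ≤ |λ(s') − λ(t')| ≤ 2^{-p+1}. -/
open MeasureTheory Filter Set

noncomputable section

/-!
Let `D n` be the difference of the `n`-digit truncations of `λ(t)` and `λ(s)`. Consecutive
`D n` differ by at most `2^(-n-1)`, so once `|D n| ≤ 2^(-n)` fails it fails forever; it holds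
for `n = 1` and fails for large `n` because `D n → λ(t) - λ(s) ≠ 0`. Hence `p` is the last
index where it holds. Since `D (p+1)` is an integer multiple of `2^(-p-1)` exceeding it in
absolute value, `|D (p+1)| ≥ 2^(-p)`, and the digits beyond position `p+1` move
`λ(s') - λ(t')` by at most `2^(-p-1)`; together with `|D p| ≤ 2^(-p)` this gives both bounds.
-/

lemma existsUnique_boundary_of_antitone {P : ℕ → Prop} (hP : Antitone P) (h0 : P 0)
    (hex : ∃ n, ¬P n) : ∃! p, P p ∧ ¬P (p + 1) := by
  refine existsUnique_of_exists_of_unique ?_ fun p q ⟨hp, hp'⟩ ⟨hq, hq'⟩ => ?_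
  · by_contra! h
    obtain ⟨n, hn⟩ := hex
    exact hn (Nat.rec h0 h n)
  · by_contra hpq
    rcases Nat.lt_or_gt_of_ne hpq with hlt | hlt
    · exact hp' (hP hlt hq)
    · exact hq' (hP hlt hp)

lemma two_mul_le_abs_intCast_mul {ε : ℝ} (hε : 0 < ε) {k : ℤ} (h : ε < |k * ε|) :
    2 * ε ≤ |k * ε| := by
  rw [abs_mul, abs_of_pos hε] at h ⊢
  have hk' : (1 : ℝ) < |(k : ℝ)| := lt_of_mul_lt_mul_right (by rwa [one_mul]) hε.le
  have hk : (1 : ℤ) < |k| := by exact_mod_cast hk'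
  have hk2 : (2 : ℝ) ≤ |(k : ℝ)| := by exact_mod_cast (show (2 : ℤ) ≤ |k| by omega)
  nlinarith

lemma two_zpow_neg_natCast (n : ℕ) : (2:ℝ) ^ (-(n:ℤ)) = 2⁻¹ ^ n := by
  rw [zpow_neg, zpow_natCast, inv_pow]

lemma two_zpow_neg_natCast_sub_one (n : ℕ) : (2:ℝ) ^ (-(n:ℤ) - 1) = 2⁻¹ ^ (n + 1) := by
  rw [← two_zpow_neg_natCast]
  push_cast
  ring_nf

lemma two_zpow_neg_natCast_add_one (n : ℕ) : (2:ℝ) ^ (-(n:ℤ) + 1) = 2 * 2⁻¹ ^ n := by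
  rw [zpow_add_one₀ two_ne_zero, two_zpow_neg_natCast, mul_comm]

def lamTerm (t : Sig) (i : ℕ) : ℝ := if t i then (2:ℝ) ^ (-(i:ℤ) - 1) else 0

lemma lamTerm_nonneg (t : Sig) (i : ℕ) : 0 ≤ lamTerm t i := by
  unfold lamTerm
  split_ifs <;> positivity

lemma lamTerm_le (t : Sig) (i : ℕ) : lamTerm t i ≤ 2⁻¹ ^ (i + 1) := by
  unfold lamTerm
  split_ifs
  · exact (two_zpow_neg_natCast_sub_one i).le
  · positivity

lemma abs_lamTerm_sub_le (s t : Sig) (i : ℕ) : |lamTerm t i - lamTerm s i| ≤ 2⁻¹ ^ (i + 1) :=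
  abs_sub_le_of_nonneg_of_le (lamTerm_nonneg t i) (lamTerm_le t i)
    (lamTerm_nonneg s i) (lamTerm_le s i)

lemma lamF_takeInf (t : Sig) (n : ℕ) :
    lamF (takeInf t n) = ∑ i ∈ Finset.range n, lamTerm t i :=
  Fin.sum_univ_eq_sum_range (lamTerm t) n

lemma inv_two_pow_add_succ (n i : ℕ) : (2:ℝ)⁻¹ ^ (i + n + 1) = 2⁻¹ ^ n / 2 / 2 ^ i := by
  rw [pow_succ, pow_add, inv_pow (2:ℝ) i]
  ring

lemma summable_lamTerm (t : Sig) : Summable (lamTerm t) := by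
  refine (summable_geometric_two' 1).of_nonneg_of_le (lamTerm_nonneg t) fun i => ?_
  simpa [inv_two_pow_add_succ 0 i] using lamTerm_le t i

lemma lamInf_sub_lamF_takeInf_mem_Icc (t : Sig) (n : ℕ) :
    lamInf t - lamF (takeInf t n) ∈ Icc 0 (2⁻¹ ^ n) := by
  have htail : lamInf t - lamF (takeInf t n) = ∑' i, lamTerm t (i + n) := by
    rw [lamF_takeInf, show lamInf t = ∑' i, lamTerm t i from rfl,
      ← (summable_lamTerm t).sum_add_tsum_nat_add n]
    ring
  have hle : ∀ i, lamTerm t (i + n) ≤ 2⁻¹ ^ n / 2 / 2 ^ i := fun i =>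
    inv_two_pow_add_succ n i ▸ lamTerm_le t (i + n)
  rw [htail]
  exact ⟨tsum_nonneg fun i => lamTerm_nonneg t _,
    hasSum_le hle ((summable_nat_add_iff n).mpr (summable_lamTerm t)).hasSum
      (hasSum_geometric_two' _)⟩

lemma abs_sub_sub_lamF_takeInf_le (u v : Sig) (n : ℕ) :
    |(lamInf u - lamInf v) - (lamF (takeInf u n) - lamF (takeInf v n))| ≤ 2⁻¹ ^ n := by
  obtain ⟨hu₀, hu₁⟩ := lamInf_sub_lamF_takeInf_mem_Icc u n
  obtain ⟨hv₀, hv₁⟩ := lamInf_sub_lamF_takeInf_mem_Icc v n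
  rw [abs_le]
  constructor <;> linarith

lemma abs_sub_lamF_takeInf_succ_le (s t : Sig) (n : ℕ) :
    |(lamF (takeInf t (n + 1)) - lamF (takeInf s (n + 1))) -
      (lamF (takeInf t n) - lamF (takeInf s n))| ≤ 2⁻¹ ^ (n + 1) := by
  convert abs_lamTerm_sub_le s t n using 2
  simp only [lamF_takeInf, Finset.sum_range_succ]
  ring

lemma lamF_takeInf_eq_intCast_mul (t : Sig) : ∀ n, ∃ k : ℤ, lamF (takeInf t n) = k * 2⁻¹ ^ n
  | 0 => ⟨0, by simp [lamF_takeInf]⟩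
  | n + 1 => by
    obtain ⟨k, hk⟩ := lamF_takeInf_eq_intCast_mul t n
    refine ⟨2 * k + if t n then 1 else 0, ?_⟩
    rw [lamF_takeInf, Finset.sum_range_succ, ← lamF_takeInf, hk, lamTerm,
      two_zpow_neg_natCast_sub_one]
    split_ifs <;> push_cast <;> ring

def CloseAt (s t : Sig) (n : ℕ) : Prop := takeInf t n ∈ neigh (takeInf s n)

lemma closeAt_iff {s t : Sig} {n : ℕ} :
    CloseAt s t n ↔ |lamF (takeInf t n) - lamF (takeInf s n)| ≤ 2⁻¹ ^ n := by
  rw [CloseAt, neigh, mem_ofPred_eq, two_zpow_neg_natCast]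

lemma takeF_takeInf_succ (t : Sig) (p : ℕ) : takeF (takeInf t (p + 1)) p = takeInf t p := by
  funext i
  simp [takeF, takeInf, Nat.lt_succ_of_lt i.isLt]

lemma mem_pairP_takeInf_iff (s t : Sig) (p : ℕ) :
    (takeInf s (p + 1), takeInf t (p + 1)) ∈ pairP p ↔ CloseAt s t p ∧ ¬CloseAt s t (p + 1) := by
  simp only [pairP, mem_ofPred_eq, takeF_takeInf_succ, CloseAt]

lemma closeAt_one (s t : Sig) : CloseAt s t 1 := by
  simpa [closeAt_iff, lamF_takeInf] using abs_lamTerm_sub_le s t 0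

lemma closeAt_antitone (s t : Sig) : Antitone (CloseAt s t) := by
  refine antitone_nat_of_succ_le fun n h => ?_
  rw [closeAt_iff] at h ⊢
  have hstep := abs_sub_lamF_takeInf_succ_le s t n
  have htri := abs_sub_abs_le_abs_sub (lamF (takeInf t n) - lamF (takeInf s n))
    (lamF (takeInf t (n + 1)) - lamF (takeInf s (n + 1)))
  have hcomm := abs_sub_comm (lamF (takeInf t (n + 1)) - lamF (takeInf s (n + 1)))
    (lamF (takeInf t n) - lamF (takeInf s n))
  have := pow_succ (2⁻¹ : ℝ) n
  linarith

lemma exists_not_closeAt {s t : Sig} (hst : lamInf s ≠ lamInf t) : ∃ n, ¬CloseAt s t n := by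
  have hpos : 0 < |lamInf t - lamInf s| := abs_pos.mpr (sub_ne_zero.mpr hst.symm)
  obtain ⟨n, hn⟩ := exists_pow_lt_of_lt_one (half_pos hpos) (by norm_num : (2⁻¹ : ℝ) < 1)
  refine ⟨n, fun hclose => ?_⟩
  rw [closeAt_iff] at hclose
  have happrox := abs_sub_sub_lamF_takeInf_le t s n
  have htri := abs_sub_abs_le_abs_sub (lamInf t - lamInf s)
    (lamF (takeInf t n) - lamF (takeInf s n))
  linarith

lemma abs_lamInf_sub_mem_Icc {u v : Sig} {p : ℕ} (hp : CloseAt u v p)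
    (hp' : ¬CloseAt u v (p + 1)) : |lamInf u - lamInf v| ∈ Icc (2⁻¹ ^ (p + 1)) (2 * 2⁻¹ ^ p) := by
  rw [closeAt_iff, abs_sub_comm] at hp hp'
  obtain ⟨k, hk⟩ := lamF_takeInf_eq_intCast_mul u (p + 1)
  obtain ⟨l, hl⟩ := lamF_takeInf_eq_intCast_mul v (p + 1)
  have hgap : 2 * 2⁻¹ ^ (p + 1) ≤ |lamF (takeInf u (p + 1)) - lamF (takeInf v (p + 1))| := by
    rw [hk, hl, ← sub_mul, ← Int.cast_sub] at hp' ⊢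
    exact two_mul_le_abs_intCast_mul (by positivity) (not_le.mp hp')
  have happrox₁ := abs_sub_sub_lamF_takeInf_le u v (p + 1)
  have happrox₀ := abs_sub_sub_lamF_takeInf_le u v p
  have htri₁ := abs_sub_abs_le_abs_sub (lamF (takeInf u (p + 1)) - lamF (takeInf v (p + 1)))
    (lamInf u - lamInf v)
  have htri₀ := abs_sub_abs_le_abs_sub (lamInf u - lamInf v)
    (lamF (takeInf u p) - lamF (takeInf v p))
  have hcomm := abs_sub_comm (lamInf u - lamInf v)
    (lamF (takeInf u (p + 1)) - lamF (takeInf v (p + 1)))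
  have := pow_succ (2⁻¹ : ℝ) p
  exact ⟨by linarith, by linarith⟩

lemma takeInf_eq_of_mem_cylN {s' s : Sig} {n m : ℕ} (h : s' ∈ cylN s n) (hm : m ≤ n) :
    takeInf s' m = takeInf s m :=
  funext fun i => h i (i.isLt.trans_le hm)

lemma closeAt_congr_of_mem_cylN {s' s t' t : Sig} {n m : ℕ} (hs : s' ∈ cylN s n)
    (ht : t' ∈ cylN t n) (hm : m ≤ n) : CloseAt s' t' m ↔ CloseAt s t m := by
  rw [CloseAt, CloseAt, takeInf_eq_of_mem_cylN hs hm, takeInf_eq_of_mem_cylN ht hm]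

theorem unique_separation_scale
    (s t : Sig) (hst : lamInf s ≠ lamInf t) :
    (∃! p : ℕ, 1 ≤ p ∧ (takeInf s (p+1), takeInf t (p+1)) ∈ pairP p) ∧
    (∀ p : ℕ, 1 ≤ p → (takeInf s (p+1), takeInf t (p+1)) ∈ pairP p →
      ∀ s' ∈ cylN s (p+1), ∀ t' ∈ cylN t (p+1),
        (2:ℝ) ^ (-(p:ℤ) - 1) ≤ |lamInf s' - lamInf t'| ∧
        |lamInf s' - lamInf t'| ≤ (2:ℝ) ^ (-(p:ℤ) + 1)) := by
  simp only [mem_pairP_takeInf_iff]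
  refine ⟨?_, fun p _ hp s' hs' t' ht' => ?_⟩
  · obtain ⟨p, hp, huniq⟩ := existsUnique_boundary_of_antitone (closeAt_antitone s t)
      (closeAt_antitone s t zero_le_one (closeAt_one s t)) (exists_not_closeAt hst)
    refine ⟨p, ⟨Nat.one_le_iff_ne_zero.mpr ?_, hp⟩, fun q hq => huniq q hq.2⟩
    rintro rfl
    exact hp.2 (closeAt_one s t)
  · rw [← closeAt_congr_of_mem_cylN hs' ht' le_rfl,
      ← closeAt_congr_of_mem_cylN hs' ht' (Nat.le_succ p)] at hp
    rw [two_zpow_neg_natCast_sub_one, two_zpow_neg_natCast_add_one]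
    exact abs_lamInf_sub_mem_Icc hp.1 hp.2
end
end

section
/- Let p ≥ 1, r ≥ p + 1, and u ∈ Σ_r. Then the number of words v ∈ Σ_r with (u|_{p+1}, v|_{p+1}) ∈ 𝒫_p is at most 3·2^{r−p}. -/
open MeasureTheory Filter Set

noncomputable section

/-!
Multiplying by `2 ^ n` turns `lamF` on `Fin n → Bool` into the binary-number bijection onto
`Fin (2 ^ n)`, so `neigh w` maps injectively into the three integers within distance one of
the number of `w`. The condition on `v` only involves its first `p` letters; the remaining
`r - p` letters are free.
-/

lemma takeF_takeF {m k l : ℕ} (w : Fin m → Bool) (hkl : k ≤ l) :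
    takeF (takeF w l) k = takeF w k := by
  funext i
  simp only [takeF, dif_pos (show (i : ℕ) < l by omega)]

def dropF {m : ℕ} (w : Fin m → Bool) (k : ℕ) : Fin (m - k) → Bool :=
  fun i => w ⟨k + i, by omega⟩

lemma takeF_dropF_injective (m k : ℕ) :
    Function.Injective fun w : Fin m → Bool => (takeF w k, dropF w k) := by
  intro w w' h
  obtain ⟨htake, hdrop⟩ := Prod.ext_iff.mp h
  funext j
  by_cases hj : (j : ℕ) < k
  · simpa [takeF] using congrFun htake ⟨j, hj⟩
  · simpa [dropF, Nat.add_sub_cancel' (not_lt.mp hj)] using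
      congrFun hdrop ⟨j - k, by omega⟩

lemma ncard_setOf_takeF_mem_le (m k : ℕ) (A : Set (Fin k → Bool)) :
    {w : Fin m → Bool | takeF w k ∈ A}.ncard ≤ A.ncard * 2 ^ (m - k) := by
  calc {w : Fin m → Bool | takeF w k ∈ A}.ncard
      ≤ (A ×ˢ (Set.univ : Set (Fin (m - k) → Bool))).ncard :=
        Set.ncard_le_ncard_of_injOn (fun w => (takeF w k, dropF w k))
          (fun _ hw => ⟨hw, Set.mem_univ _⟩) (takeF_dropF_injective m k).injOn (Set.toFinite _)
    _ = A.ncard * 2 ^ (m - k) := by simp [Set.ncard_prod]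

/-- The binary number `w₀ w₁ … wₙ₋₁`, most significant digit first. -/
def binaryEquiv (n : ℕ) : (Fin n → Bool) ≃ Fin (2 ^ n) :=
  (Equiv.arrowCongr Fin.revPerm finTwoEquiv.symm).trans finFunctionFinEquiv

lemma binaryEquiv_eq {n : ℕ} (w : Fin n → Bool) :
    ((binaryEquiv n w : ℕ) : ℝ) = 2 ^ (n : ℤ) * lamF w := by
  rw [binaryEquiv, Equiv.trans_apply, finFunctionFinEquiv_apply, lamF, Finset.mul_sum]
  push_cast
  refine Fintype.sum_bijective Fin.rev Fin.rev_bijective _ _ (fun i => ?_)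
  simp only [Equiv.arrowCongr_apply, Fin.revPerm_symm, Fin.revPerm_apply, Function.comp_apply]
  cases w i.rev
  · simp [finTwoEquiv]
  · simp only [finTwoEquiv, Equiv.coe_fn_symm_mk, if_true, Fin.val_rev, cond_true,
      Fin.val_one, Nat.cast_one, one_mul]
    rw [← zpow_natCast, ← zpow_add₀ two_ne_zero]
    congr 1
    omega

lemma ncard_neigh_le_three {n : ℕ} (w : Fin n → Bool) : (neigh w).ncard ≤ 3 := by
  set a : ℤ := ((binaryEquiv n w : ℕ) : ℤ)
  have hmaps : ∀ v ∈ neigh w, ((binaryEquiv n v : ℕ) : ℤ) ∈ Set.Icc (a - 1) (a + 1) := by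
    intro v hv
    have h : |(((binaryEquiv n v : ℕ) : ℤ) : ℝ) - (a : ℝ)| ≤ 1 := by
      have h2n : (0 : ℝ) < 2 ^ (n : ℤ) := by positivity
      calc |(((binaryEquiv n v : ℕ) : ℤ) : ℝ) - (a : ℝ)|
          = 2 ^ (n : ℤ) * |lamF v - lamF w| := by
            simp only [a, Int.cast_natCast, binaryEquiv_eq, ← mul_sub, abs_mul, abs_of_pos h2n]
        _ ≤ 2 ^ (n : ℤ) * 2 ^ (-(n : ℤ)) := mul_le_mul_of_nonneg_left hv h2n.le
        _ = 1 := by rw [← zpow_add₀ two_ne_zero, add_neg_cancel, zpow_zero]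
    obtain ⟨hlo, hhi⟩ := abs_le.mp (show |((binaryEquiv n v : ℕ) : ℤ) - a| ≤ 1 by exact_mod_cast h)
    exact ⟨by linarith, by linarith⟩
  calc (neigh w).ncard ≤ (Set.Icc (a - 1) (a + 1)).ncard :=
        Set.ncard_le_ncard_of_injOn _ hmaps
          (fun v _ v' _ h => (binaryEquiv n).injective (Fin.ext (by exact_mod_cast h)))
          (Set.finite_Icc _ _)
    _ = 3 := by
        rw [← Finset.coe_Icc, Set.ncard_coe_finset, Int.card_Icc]
        omega

theorem neighbor_pair_counting_general
    (p r : ℕ) (u : Fin r → Bool) :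
    Set.ncard {v : Fin r → Bool | (takeF u (p+1), takeF v (p+1)) ∈ pairP p}
      ≤ 3 * 2 ^ (r - p) := by
  calc Set.ncard {v : Fin r → Bool | (takeF u (p+1), takeF v (p+1)) ∈ pairP p}
      ≤ {v : Fin r → Bool | takeF v p ∈ neigh (takeF u p)}.ncard := by
        refine Set.ncard_le_ncard (fun v hv => ?_) (Set.toFinite _)
        obtain ⟨hprefix, -⟩ := hv
        rwa [takeF_takeF _ p.le_succ, takeF_takeF _ p.le_succ] at hprefix
    _ ≤ (neigh (takeF u p)).ncard * 2 ^ (r - p) := ncard_setOf_takeF_mem_le r p _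
    _ ≤ 3 * 2 ^ (r - p) := Nat.mul_le_mul_right _ (ncard_neigh_le_three _)

theorem neighbor_pair_counting
    (p r : ℕ) (hp : 1 ≤ p) (hr : p + 1 ≤ r) (u : Fin r → Bool) :
    Set.ncard {v : Fin r → Bool | (takeF u (p+1), takeF v (p+1)) ∈ pairP p}
      ≤ 3 * 2 ^ (r - p) :=
  neighbor_pair_counting_general p r u

end
end

section
/- Let π be a real random variable with a density f satisfying ‖f‖_∞ < ∞, let A ≠ 0, B ∈ ℝ, c > 0 and γ > 1. Then E[ max( ((Aπ + B)² + c²)^{-γ/2} , 1 ) ] ≤ 1 + |A|^{-1} c^{1−γ} ‖f‖_∞ ∫_ℝ (z² + 1)^{-γ/2} dz, and the integral ∫_ℝ (z² + 1)^{-γ/2} dz is finite. -/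
open MeasureTheory Filter Set

noncomputable section

/-!
The law of `π` has density `f ≤ ‖f‖_∞` a.e., so it is dominated by `‖f‖_∞ • volume`; together with
`max x 1 ≤ 1 + x` for `x ≥ 0` this bounds the expectation by `1 + ‖f‖_∞ ∫ G` for the kernel
`G x = ((A x + B)² + c²)^(-γ/2)`. The substitution `z = (A x + B) / c` gives
`∫ G = |A|⁻¹ c^(1-γ) ∫ (z² + 1)^(-γ/2)`, and the last integral is finite since `γ > 1`.
-/

open scoped ENNReal

theorem integrable_rpow_neg_sq_add_one {γ : ℝ} (hγ : 1 < γ) :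
    Integrable fun z : ℝ => (z ^ 2 + 1) ^ (-γ / 2) := by
  simpa [Real.norm_eq_abs, sq_abs, add_comm]
    using integrable_rpow_neg_one_add_norm_sq (E := ℝ) (μ := volume) (r := γ) (by simpa using hγ)

theorem sq_add_sq_rpow_neg_half {c : ℝ} (hc : 0 < c) (γ y : ℝ) :
    (y ^ 2 + c ^ 2) ^ (-γ / 2) = c ^ (-γ) * ((c⁻¹ * y) ^ 2 + 1) ^ (-γ / 2) := by
  have hsq : y ^ 2 + c ^ 2 = c ^ 2 * ((c⁻¹ * y) ^ 2 + 1) := by field_simp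
  rw [hsq, Real.mul_rpow (by positivity) (by positivity), ← Real.rpow_natCast c 2,
    ← Real.rpow_mul hc.le]
  congr 2
  push_cast
  ring

theorem integrable_comp_mul_add {E : Type*} [NormedAddCommGroup E] {k : ℝ → E}
    (hk : Integrable k) {a : ℝ} (ha : a ≠ 0) (b : ℝ) :
    Integrable fun x => k (a * x + b) :=
  (hk.comp_add_right b).comp_mul_left' ha

theorem integral_comp_mul_add {E : Type*} [NormedAddCommGroup E] [NormedSpace ℝ E]
    (k : ℝ → E) (a b : ℝ) :
    ∫ x, k (a * x + b) = |a|⁻¹ • ∫ x, k x := by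
  rw [Measure.integral_comp_mul_left (fun x => k (x + b)) a, integral_add_right_eq_self, abs_inv]

theorem integrable_rpow_neg_half_affine_sq_add_sq {A : ℝ} (hA : A ≠ 0) (B : ℝ) {c γ : ℝ}
    (hc : 0 < c) (hγ : 1 < γ) :
    Integrable fun x : ℝ => ((A * x + B) ^ 2 + c ^ 2) ^ (-γ / 2) := by
  simp_rw [sq_add_sq_rpow_neg_half hc, mul_add, ← mul_assoc]
  exact (integrable_comp_mul_add (integrable_rpow_neg_sq_add_one hγ)
    (mul_ne_zero (inv_ne_zero hc.ne') hA) _).const_mul _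

theorem integral_rpow_neg_half_affine_sq_add_sq (A B : ℝ) {c : ℝ} (hc : 0 < c) (γ : ℝ) :
    ∫ x : ℝ, ((A * x + B) ^ 2 + c ^ 2) ^ (-γ / 2) =
      |A|⁻¹ * c ^ (1 - γ) * ∫ z : ℝ, (z ^ 2 + 1) ^ (-γ / 2) := by
  simp_rw [sq_add_sq_rpow_neg_half hc, mul_add, ← mul_assoc]
  rw [integral_const_mul, integral_comp_mul_add (fun z : ℝ => (z ^ 2 + 1) ^ (-γ / 2)),
    smul_eq_mul, abs_mul, abs_inv, abs_of_pos hc, sub_eq_add_neg, Real.rpow_add hc, Real.rpow_one]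
  field_simp

theorem withDensity_ofReal_le_eLpNorm_top_smul {α : Type*} [MeasurableSpace α] (μ : Measure α)
    (f : α → ℝ) :
    μ.withDensity (fun x => ENNReal.ofReal (f x)) ≤ eLpNorm f ⊤ μ • μ := by
  rw [eLpNorm_exponent_top, ← withDensity_const]
  refine withDensity_mono ?_
  filter_upwards [ae_le_eLpNormEssSup (f := f) (μ := μ)] with x hx
  exact (Real.ofReal_le_enorm (f x)).trans hx

theorem integral_le_toReal_mul_integral_of_le_smul {α : Type*} [MeasurableSpace α]
    {μ ν : Measure α} {C : ℝ≥0∞} (hμν : μ ≤ C • ν) (hC : C ≠ ∞) {g : α → ℝ}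
    (hg : 0 ≤ g) (hgν : Integrable g ν) :
    ∫ x, g x ∂μ ≤ C.toReal * ∫ x, g x ∂ν := by
  rw [← smul_eq_mul, ← integral_smul_measure]
  exact integral_mono_measure hμν (ae_of_all _ hg) (hgν.smul_measure hC)

theorem integral_max_one_le {Ω : Type*} [MeasurableSpace Ω] {P : Measure Ω}
    [IsProbabilityMeasure P] {h : Ω → ℝ} (hh : Integrable h P) (h0 : ∀ᵐ ω ∂P, 0 ≤ h ω) :
    ∫ ω, max (h ω) 1 ∂P ≤ 1 + ∫ ω, h ω ∂P := by
  calc ∫ ω, max (h ω) 1 ∂P ≤ ∫ ω, (1 + h ω) ∂P := by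
        refine integral_mono_ae (hh.sup (integrable_const 1)) ((integrable_const 1).add hh) ?_
        filter_upwards [h0] with ω hω
        exact max_le (by linarith) (by linarith)
    _ = 1 + ∫ ω, h ω ∂P := by rw [integral_add (integrable_const 1) hh]; simp

theorem expectation_kernel_bound_graph_case_general
    {Ω : Type*} [MeasurableSpace Ω] (P : Measure Ω) [IsProbabilityMeasure P]
    (π : Ω → ℝ) (hπ : Measurable π)
    (f : ℝ → ℝ)
    (hdens : P.map π = volume.withDensity (fun x => ENNReal.ofReal (f x)))
    (hfb : eLpNorm f ⊤ volume < ⊤)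
    (A B c γ : ℝ) (hA : A ≠ 0) (hc : 0 < c) (hγ : 1 < γ) :
    Integrable (fun z : ℝ => ((z ^ 2 + 1) ^ (-γ / 2))) ∧
    ∫ ω, max (((A * π ω + B) ^ 2 + c ^ 2) ^ (-γ / 2)) 1 ∂P ≤
      1 + |A|⁻¹ * c ^ (1 - γ) * (eLpNorm f ⊤ volume).toReal *
        ∫ z : ℝ, (z ^ 2 + 1) ^ (-γ / 2) := by
  refine ⟨integrable_rpow_neg_sq_add_one hγ, ?_⟩
  set G : ℝ → ℝ := fun x => ((A * x + B) ^ 2 + c ^ 2) ^ (-γ / 2)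
  have hG0 : 0 ≤ G := fun x => Real.rpow_nonneg (by positivity) _
  have hG : Integrable G := integrable_rpow_neg_half_affine_sq_add_sq hA B hc hγ
  have hlaw : P.map π ≤ eLpNorm f ⊤ volume • volume :=
    hdens ▸ withDensity_ofReal_le_eLpNorm_top_smul volume f
  have hGπ : Integrable G (P.map π) := (hG.smul_measure hfb.ne).mono_measure hlaw
  calc ∫ ω, max (G (π ω)) 1 ∂P ≤ 1 + ∫ ω, G (π ω) ∂P :=
        integral_max_one_le ((integrable_map_measure hGπ.1 hπ.aemeasurable).mp hGπ)
          (ae_of_all _ fun ω => hG0 (π ω))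
    _ = 1 + ∫ x, G x ∂(P.map π) := by rw [integral_map hπ.aemeasurable hGπ.1]
    _ ≤ 1 + (eLpNorm f ⊤ volume).toReal * ∫ x, G x := by
        gcongr
        exact integral_le_toReal_mul_integral_of_le_smul hlaw hfb.ne hG0 hG
    _ = _ := by rw [integral_rpow_neg_half_affine_sq_add_sq A B hc γ]; ring

theorem expectation_kernel_bound_graph_case
    {Ω : Type*} [MeasurableSpace Ω] (P : Measure Ω) [IsProbabilityMeasure P]
    (π : Ω → ℝ) (hπ : Measurable π)
    (f : ℝ → ℝ) (hf : Measurable f)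
    (hdens : P.map π = volume.withDensity (fun x => ENNReal.ofReal (f x)))
    (hfb : eLpNorm f ⊤ volume < ⊤)
    (A B c γ : ℝ) (hA : A ≠ 0) (hc : 0 < c) (hγ : 1 < γ) :
    Integrable (fun z : ℝ => ((z ^ 2 + 1) ^ (-γ / 2))) ∧
    ∫ ω, max (((A * π ω + B) ^ 2 + c ^ 2) ^ (-γ / 2)) 1 ∂P ≤
      1 + |A|⁻¹ * c ^ (1 - γ) * (eLpNorm f ⊤ volume).toReal *
        ∫ z : ℝ, (z ^ 2 + 1) ^ (-γ / 2) :=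
  expectation_kernel_bound_graph_case_general P π hπ f hdens hfb A B c γ hA hc hγ
end
end

section
/- Let π be a real random variable with a density f satisfying ‖f‖_∞ < ∞, let A ≠ 0, B ∈ ℝ, α > 0 and γ ∈ (0,1). Then E[ max( |Aπ + B|^{-γ} , 1 ) · 𝟏_{\{ 0 < |Aπ + B| ≤ α \}} ] ≤ 1 + |A|^{-1} ‖f‖_∞ · 2α^{1−γ}/(1−γ). -/
/-!
On the event, `max (|Y|^(-γ)) 1 ≤ 1 + |Y|^(-γ)` with `Y = Aπ + B`; the constant contributes at most
`P(event) ≤ 1`. The singular part is an integral against the law of `π`: bound its density by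
`‖f‖_∞`, substitute `u = Ax + B` (Jacobian `|A|⁻¹`), and integrate the even kernel `|u|^(-γ)` over
`0 < |u| ≤ α`, which gives `2 α^(1-γ) / (1-γ)` because `γ < 1`.
-/

open MeasureTheory Filter Set

noncomputable section

open scoped ENNReal

lemma lintegral_comp_mul_add (g : ℝ → ℝ≥0∞) {a : ℝ} (ha : a ≠ 0) (b : ℝ) :
    ∫⁻ x, g (a * x + b) = ENNReal.ofReal |a|⁻¹ * ∫⁻ x, g x := by
  calc ∫⁻ x, g (a * x + b) = ∫⁻ y, g (y + b) ∂(volume.map (a * ·)) :=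
        ((Homeomorph.mulLeft₀ a ha).measurableEmbedding.lintegral_map (fun y => g (y + b))).symm
    _ = ENNReal.ofReal |a|⁻¹ * ∫⁻ x, g x := by
        rw [Real.map_volume_mul_left ha, lintegral_smul_measure, lintegral_add_right_eq_self g b,
          abs_inv, smul_eq_mul]

lemma lintegral_comp_abs_of_eq_zero_of_nonpos {g : ℝ → ℝ≥0∞} (hg : Measurable g)
    (hg0 : ∀ t ≤ 0, g t = 0) :
    ∫⁻ u, g |u| = 2 * ∫⁻ t, g t := by
  have hsplit : ∀ u, g |u| = g u + g (-u) := by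
    intro u
    rcases le_total u 0 with hu | hu
    · rw [abs_of_nonpos hu, hg0 u hu, zero_add]
    · rw [abs_of_nonneg hu, hg0 (-u) (by linarith), add_zero]
  simp_rw [hsplit]
  rw [lintegral_add_left hg, lintegral_neg_eq_self g, two_mul]

lemma lintegral_Ioc_rpow {a r : ℝ} (ha : 0 ≤ a) (hr : -1 < r) :
    ∫⁻ t in Ioc 0 a, ENNReal.ofReal (t ^ r) = ENNReal.ofReal (a ^ (r + 1) / (r + 1)) := by
  have hint : IntegrableOn (fun t : ℝ => t ^ r) (Ioc 0 a) := by
    simpa [intervalIntegrable_iff, uIoc_of_le ha] using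
      intervalIntegral.intervalIntegrable_rpow' (a := 0) (b := a) hr
  have hnn : 0 ≤ᵐ[volume.restrict (Ioc 0 a)] fun t : ℝ => t ^ r := by
    filter_upwards [ae_restrict_mem measurableSet_Ioc] with t ht
    exact Real.rpow_nonneg ht.1.le r
  rw [← ofReal_integral_eq_lintegral_ofReal hint hnn, ← intervalIntegral.integral_of_le ha,
    integral_rpow (Or.inl hr), Real.zero_rpow (by linarith), sub_zero]

lemma ae_ofReal_le_eLpNorm_top {α : Type*} [MeasurableSpace α] (f : α → ℝ) (μ : Measure α) :
    ∀ᵐ x ∂μ, ENNReal.ofReal (f x) ≤ eLpNorm f ⊤ μ := by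
  filter_upwards [ae_le_eLpNormEssSup (f := f) (μ := μ)] with x hx
  exact (Real.ofReal_le_enorm (f x)).trans (by rwa [eLpNorm_exponent_top])

lemma lintegral_comp_le_mul_of_map_eq_withDensity {Ω α : Type*} [MeasurableSpace Ω]
    [MeasurableSpace α] {P : Measure Ω} {μ : Measure α} {X : Ω → α} (hX : Measurable X)
    {ρ : α → ℝ≥0∞} (hρ : Measurable ρ) (hmap : P.map X = μ.withDensity ρ) {C : ℝ≥0∞}
    (hC : ∀ᵐ x ∂μ, ρ x ≤ C) {g : α → ℝ≥0∞} (hg : Measurable g) :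
    ∫⁻ ω, g (X ω) ∂P ≤ C * ∫⁻ x, g x ∂μ := by
  rw [← lintegral_map hg hX, hmap, lintegral_withDensity_eq_lintegral_mul μ hρ hg,
    ← lintegral_const_mul C hg]
  refine lintegral_mono_ae ?_
  filter_upwards [hC] with x hx
  exact mul_le_mul_left hx (g x)

lemma ofReal_indicator_max_rpow_le (α γ u : ℝ) :
    ENNReal.ofReal ({u : ℝ | 0 < |u| ∧ |u| ≤ α}.indicator (fun u => max (|u| ^ (-γ)) 1) u)
      ≤ 1 + (Ioc 0 α).indicator (fun t => ENNReal.ofReal (t ^ (-γ))) |u| := by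
  by_cases h : 0 < |u| ∧ |u| ≤ α
  · rw [indicator_of_mem (show u ∈ {u : ℝ | 0 < |u| ∧ |u| ≤ α} from h),
      indicator_of_mem (show |u| ∈ Ioc 0 α from h)]
    have hpow : 0 ≤ |u| ^ (-γ) := Real.rpow_nonneg (abs_nonneg u) _
    calc ENNReal.ofReal (max (|u| ^ (-γ)) 1) ≤ ENNReal.ofReal (1 + |u| ^ (-γ)) :=
          ENNReal.ofReal_le_ofReal (max_le (by linarith) (by linarith))
      _ = 1 + ENNReal.ofReal (|u| ^ (-γ)) := by
          rw [ENNReal.ofReal_add zero_le_one hpow, ENNReal.ofReal_one]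
  · rw [indicator_of_notMem (show u ∉ {u : ℝ | 0 < |u| ∧ |u| ≤ α} from h), ENNReal.ofReal_zero]
    exact zero_le

theorem expectation_kernel_bound_range_case_general
    {Ω : Type*} [MeasurableSpace Ω] (P : Measure Ω) [IsProbabilityMeasure P]
    (π : Ω → ℝ) (hπ : Measurable π)
    (f : ℝ → ℝ) (hf : Measurable f)
    (hdens : P.map π = volume.withDensity (fun x => ENNReal.ofReal (f x)))
    (hfb : eLpNorm f ⊤ volume < ⊤)
    (A B α γ : ℝ) (hA : A ≠ 0) (hα : 0 < α) (hγ1 : γ < 1) :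
    ∫⁻ ω, ENNReal.ofReal
        (Set.indicator {ω' : Ω | 0 < |A * π ω' + B| ∧ |A * π ω' + B| ≤ α}
          (fun ω' => max (|A * π ω' + B| ^ (-γ)) 1) ω) ∂P
      ≤ ENNReal.ofReal
          (1 + |A|⁻¹ * (eLpNorm f ⊤ volume).toReal * (2 * α ^ (1 - γ) / (1 - γ))) := by
  set k : ℝ → ℝ≥0∞ := (Ioc 0 α).indicator (fun t => ENNReal.ofReal (t ^ (-γ)))
  have hk : Measurable k := by
    refine Measurable.indicator ?_ measurableSet_Ioc
    fun_prop
  have hk0 : ∀ t ≤ 0, k t = 0 := fun t ht => indicator_of_notMem (fun h => ht.not_gt h.1) _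
  have hkint : ∫⁻ t, k t = ENNReal.ofReal (α ^ (1 - γ) / (1 - γ)) := by
    rw [lintegral_indicator measurableSet_Ioc, lintegral_Ioc_rpow hα.le (by linarith),
      neg_add_eq_sub]
  calc _ ≤ ∫⁻ ω, (1 + k |A * π ω + B|) ∂P :=
        lintegral_mono fun ω => ofReal_indicator_max_rpow_le α γ (A * π ω + B)
    _ = 1 + ∫⁻ ω, k |A * π ω + B| ∂P := by
        rw [lintegral_add_left measurable_const, lintegral_const, measure_univ, one_mul]
    _ ≤ 1 + eLpNorm f ⊤ volume * ∫⁻ x, k |A * x + B| := by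
        gcongr
        exact lintegral_comp_le_mul_of_map_eq_withDensity hπ hf.ennreal_ofReal hdens
          (ae_ofReal_le_eLpNorm_top f volume) (g := fun x => k |A * x + B|) (by fun_prop)
    _ = 1 + eLpNorm f ⊤ volume *
          (ENNReal.ofReal |A|⁻¹ * (2 * ENNReal.ofReal (α ^ (1 - γ) / (1 - γ)))) := by
        rw [lintegral_comp_mul_add (fun x => k |x|) hA,
          lintegral_comp_abs_of_eq_zero_of_nonpos hk hk0, hkint]
    _ = _ := by
        rw [← ENNReal.ofReal_toReal hfb.ne, ← ENNReal.ofReal_ofNat 2,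
          ← ENNReal.ofReal_mul zero_le_two,
          ← ENNReal.ofReal_mul (by positivity), ← ENNReal.ofReal_mul ENNReal.toReal_nonneg,
          ← ENNReal.ofReal_one, ← ENNReal.ofReal_add zero_le_one (by positivity),
          ENNReal.toReal_ofReal ENNReal.toReal_nonneg]
        ring_nf

theorem expectation_kernel_bound_range_case
    {Ω : Type*} [MeasurableSpace Ω] (P : Measure Ω) [IsProbabilityMeasure P]
    (π : Ω → ℝ) (hπ : Measurable π)
    (f : ℝ → ℝ) (hf : Measurable f)
    (hdens : P.map π = volume.withDensity (fun x => ENNReal.ofReal (f x)))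
    (hfb : eLpNorm f ⊤ volume < ⊤)
    (A B α γ : ℝ) (hA : A ≠ 0) (hα : 0 < α) (hγ0 : 0 < γ) (hγ1 : γ < 1) :
    ∫⁻ ω, ENNReal.ofReal
        (Set.indicator {ω' : Ω | 0 < |A * π ω' + B| ∧ |A * π ω' + B| ≤ α}
          (fun ω' => max (|A * π ω' + B| ^ (-γ)) 1) ω) ∂P
      ≤ ENNReal.ofReal
          (1 + |A|⁻¹ * (eLpNorm f ⊤ volume).toReal * (2 * α ^ (1 - γ) / (1 - γ))) :=
  expectation_kernel_bound_range_case_general P π hπ f hf hdens hfb A B α γ hA hα hγ1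
end
end

section
/- Let π be a real random variable with a density f satisfying ‖f‖_∞ < ∞, let A ≠ 0, B ∈ ℝ, D ≠ 0, η ∈ ℝ and γ ∈ (0,1). Then E[ | |η(Aπ + B) + D|^{-γ} − |Aπ + B|^{-γ} | ] ≤ |A|^{-1} |D|^{1−γ} ‖f‖_∞ ∫_ℝ | |ηz + 1|^{-γ} − |z|^{-γ} | dz (the inequality being trivially true when the right-hand integral is infinite). -/
open MeasureTheory Filter Set

noncomputable section

open scoped ENNReal

/-! Transport the expectation to the density of `π` and bound that density by `‖f‖_∞`. The
substitution `A x + B = D z` contributes the Jacobian `|A|⁻¹ |D|`, and homogeneity of `|·|^{-γ}`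
contributes `|D|^{-γ}`. The `[0, ∞]`-valued integrand then equals the real one except at
`z = 0` and `z = -η⁻¹`, which form a null set. -/

lemma max_tsub_ofReal_eq_ofReal_abs_sub {a b : ℝ} (ha : 0 ≤ a) (hb : 0 ≤ b) :
    max (ENNReal.ofReal a - ENNReal.ofReal b) (ENNReal.ofReal b - ENNReal.ofReal a)
      = ENNReal.ofReal |a - b| := by
  rcases le_total a b with h | h
  · rw [abs_sub_comm, abs_of_nonneg (sub_nonneg.2 h), ENNReal.ofReal_sub b ha,
      tsub_eq_zero_of_le (ENNReal.ofReal_le_ofReal h)]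
    exact max_eq_right zero_le
  · rw [abs_of_nonneg (sub_nonneg.2 h), ENNReal.ofReal_sub a hb,
      tsub_eq_zero_of_le (ENNReal.ofReal_le_ofReal h)]
    exact max_eq_left zero_le

theorem lintegral_comp_le_eLpNorm_top_mul {α Ω : Type*} [MeasurableSpace α] [MeasurableSpace Ω]
    {μ : Measure α} {P : Measure Ω} {X : Ω → α} (hX : Measurable X) {f : α → ℝ}
    (hf : Measurable f) (hlaw : P.map X = μ.withDensity (fun x => ENNReal.ofReal (f x)))
    {g : α → ℝ≥0∞} (hg : Measurable g) :
    ∫⁻ ω, g (X ω) ∂P ≤ eLpNorm f ⊤ μ * ∫⁻ x, g x ∂μ := by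
  rw [← lintegral_map hg hX, hlaw, lintegral_withDensity_eq_lintegral_mul _ hf.ennreal_ofReal hg,
    ← lintegral_const_mul _ hg]
  refine lintegral_mono_ae ?_
  filter_upwards [ae_le_eLpNormEssSup (f := f) (μ := μ)] with x hx
  rw [eLpNorm_exponent_top]
  exact mul_le_mul_left ((Real.ofReal_le_enorm (f x)).trans hx) _

theorem lintegral_comp_mul_add_real (g : ℝ → ℝ≥0∞) {a : ℝ} (ha : a ≠ 0) (b : ℝ) :
    ∫⁻ x, g (a * x + b) = ENNReal.ofReal |a|⁻¹ * ∫⁻ y, g y := by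
  have hscale := lintegral_map_equiv (μ := volume) (fun y => g (y + b))
    (Homeomorph.mulLeft₀ a ha).toMeasurableEquiv
  rw [Homeomorph.toMeasurableEquiv_coe, Homeomorph.coe_mulLeft₀, Real.map_volume_mul_left ha,
    lintegral_smul_measure, lintegral_add_right_eq_self, abs_inv] at hscale
  exact hscale.symm

/-- `max (a - b) (b - a)` is `|a - b|` on `ℝ≥0∞`. The powers are taken in `ℝ≥0∞`, where
`0 ^ (-γ) = ⊤` for `γ > 0`, whereas `(0 : ℝ) ^ (-γ) = 0`. -/
def kernelDiff (η D γ y : ℝ) : ℝ≥0∞ :=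
  max (ENNReal.ofReal |η * y + D| ^ (-γ) - ENNReal.ofReal |y| ^ (-γ))
    (ENNReal.ofReal |y| ^ (-γ) - ENNReal.ofReal |η * y + D| ^ (-γ))

section kernelDiff

variable (η γ : ℝ)

@[fun_prop]
theorem measurable_kernelDiff (D : ℝ) : Measurable (kernelDiff η D γ) := by
  unfold kernelDiff
  fun_prop

theorem kernelDiff_eq_ofReal {D y : ℝ} (hy : y ≠ 0) (hyD : η * y + D ≠ 0) :
    kernelDiff η D γ y = ENNReal.ofReal |(|η * y + D| ^ (-γ) - |y| ^ (-γ))| := by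
  rw [kernelDiff, ENNReal.ofReal_rpow_of_pos (abs_pos.2 hy),
    ENNReal.ofReal_rpow_of_pos (abs_pos.2 hyD),
    max_tsub_ofReal_eq_ofReal_abs_sub (by positivity) (by positivity)]

theorem kernelDiff_mul {D : ℝ} (hD : D ≠ 0) (z : ℝ) :
    kernelDiff η D γ (D * z) = ENNReal.ofReal (|D| ^ (-γ)) * kernelDiff η 1 γ z := by
  have hscale : ∀ w : ℝ, ENNReal.ofReal |D * w| ^ (-γ)
      = ENNReal.ofReal (|D| ^ (-γ)) * ENNReal.ofReal |w| ^ (-γ) := fun w => by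
    rw [abs_mul, ENNReal.ofReal_mul (abs_nonneg D),
      ENNReal.mul_rpow_of_ne_top ENNReal.ofReal_ne_top ENNReal.ofReal_ne_top,
      ENNReal.ofReal_rpow_of_pos (abs_pos.2 hD)]
  have hmono : Monotone (ENNReal.ofReal (|D| ^ (-γ)) * ·) := fun _ _ h => mul_le_mul_right h _
  rw [kernelDiff, kernelDiff, show η * (D * z) + D = D * (η * z + 1) by ring, hscale, hscale,
    ← ENNReal.mul_sub (fun _ _ => ENNReal.ofReal_ne_top),
    ← ENNReal.mul_sub (fun _ _ => ENNReal.ofReal_ne_top), hmono.map_max]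

theorem kernelDiff_ae_eq_ofReal :
    kernelDiff η 1 γ =ᵐ[volume] fun z => ENNReal.ofReal |(|η * z + 1| ^ (-γ) - |z| ^ (-γ))| := by
  have hsingular : ∀ z : ℝ, z = 0 ∨ η * z + 1 = 0 → z ∈ ({0, -η⁻¹} : Set ℝ) := by
    rintro z (rfl | hz)
    · exact Set.mem_insert _ _
    · have hη : η ≠ 0 := by rintro rfl; simp at hz
      refine Set.mem_insert_of_mem _ (Set.mem_singleton_iff.2 ?_)
      field_simp
      linarith
  filter_upwards [(Set.toFinite {0, -η⁻¹}).countable.ae_notMem volume] with z hz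
  obtain ⟨hz, hzη⟩ := not_or.1 (mt (hsingular z) hz)
  exact kernelDiff_eq_ofReal η γ hz hzη

theorem lintegral_kernelDiff {D : ℝ} (hD : D ≠ 0) :
    ∫⁻ y, kernelDiff η D γ y
      = ENNReal.ofReal (|D| ^ (1 - γ)) *
          ∫⁻ z, ENNReal.ofReal |(|η * z + 1| ^ (-γ) - |z| ^ (-γ))| := by
  have hD' : 0 < |D| := abs_pos.2 hD
  have hsub := lintegral_comp_mul_add_real (kernelDiff η D γ) hD 0
  simp only [add_zero, kernelDiff_mul η γ hD] at hsub
  rw [lintegral_const_mul' _ _ ENNReal.ofReal_ne_top,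
    lintegral_congr_ae (kernelDiff_ae_eq_ofReal η γ)] at hsub
  calc ∫⁻ y, kernelDiff η D γ y
      = ENNReal.ofReal |D| * (ENNReal.ofReal |D|⁻¹ * ∫⁻ y, kernelDiff η D γ y) := by
        rw [← mul_assoc, ← ENNReal.ofReal_mul hD'.le, mul_inv_cancel₀ hD'.ne', ENNReal.ofReal_one,
          one_mul]
    _ = _ := by
        rw [← hsub, ← mul_assoc, ← ENNReal.ofReal_mul hD'.le, sub_eq_add_neg,
          Real.rpow_add hD', Real.rpow_one]

end kernelDiff

theorem expectation_kernel_difference_bound_general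
    {Ω : Type*} [MeasurableSpace Ω] (P : Measure Ω)
    (π : Ω → ℝ) (hπ : Measurable π)
    (f : ℝ → ℝ) (hf : Measurable f)
    (hdens : P.map π = volume.withDensity (fun x => ENNReal.ofReal (f x)))
    (hfb : eLpNorm f ⊤ volume < ⊤)
    (A B D η γ : ℝ) (hA : A ≠ 0) (hD : D ≠ 0) :
    ∫⁻ ω, (max
        ((ENNReal.ofReal |η * (A * π ω + B) + D| ^ (-γ)) -
          (ENNReal.ofReal |A * π ω + B| ^ (-γ)))
        ((ENNReal.ofReal |A * π ω + B| ^ (-γ)) -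
          (ENNReal.ofReal |η * (A * π ω + B) + D| ^ (-γ)))) ∂P
      ≤ ENNReal.ofReal (|A|⁻¹ * |D| ^ (1 - γ) * (eLpNorm f ⊤ volume).toReal) *
          ∫⁻ z : ℝ, ENNReal.ofReal (abs (|η * z + 1| ^ (-γ) - |z| ^ (-γ))) := by
  calc ∫⁻ ω, kernelDiff η D γ (A * π ω + B) ∂P
      ≤ eLpNorm f ⊤ volume * ∫⁻ x, kernelDiff η D γ (A * x + B) :=
        lintegral_comp_le_eLpNorm_top_mul hπ hf hdens (by fun_prop)
    _ = eLpNorm f ⊤ volume * (ENNReal.ofReal |A|⁻¹ * (ENNReal.ofReal (|D| ^ (1 - γ)) *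
          ∫⁻ z, ENNReal.ofReal |(|η * z + 1| ^ (-γ) - |z| ^ (-γ))|)) := by
        rw [lintegral_comp_mul_add_real _ hA, lintegral_kernelDiff η γ hD]
    _ = _ := by
        rw [ENNReal.ofReal_mul (by positivity), ENNReal.ofReal_mul (by positivity),
          ENNReal.ofReal_toReal hfb.ne]
        ring

theorem expectation_kernel_difference_bound
    {Ω : Type*} [MeasurableSpace Ω] (P : Measure Ω) [IsProbabilityMeasure P]
    (π : Ω → ℝ) (hπ : Measurable π)
    (f : ℝ → ℝ) (hf : Measurable f)
    (hdens : P.map π = volume.withDensity (fun x => ENNReal.ofReal (f x)))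
    (hfb : eLpNorm f ⊤ volume < ⊤)
    (A B D η γ : ℝ) (hA : A ≠ 0) (hD : D ≠ 0) (hγ0 : 0 < γ) (hγ1 : γ < 1) :
    ∫⁻ ω, (max
        ((ENNReal.ofReal |η * (A * π ω + B) + D| ^ (-γ)) -
          (ENNReal.ofReal |A * π ω + B| ^ (-γ)))
        ((ENNReal.ofReal |A * π ω + B| ^ (-γ)) -
          (ENNReal.ofReal |η * (A * π ω + B) + D| ^ (-γ)))) ∂P
      ≤ ENNReal.ofReal (|A|⁻¹ * |D| ^ (1 - γ) * (eLpNorm f ⊤ volume).toReal) *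
          ∫⁻ z : ℝ, ENNReal.ofReal (abs (|η * z + 1| ^ (-γ) - |z| ^ (-γ))) :=
  expectation_kernel_difference_bound_general P π hπ f hf hdens hfb A B D η γ hA hD

end
end
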